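/- arXiv:1603.04877 — 2 statements merged into one kernel-verified Lean document; each statement's English description precedes it below -/
import Mathlib

section
/- If two triangles in ℝ³ have all six vertices in general position (no four coplanar) and their intersection is nonempty, then the intersection is a nondegenerate closed line segment, and exactly two of the six edges of the two triangles pierce the relative interior of the other triangle. -/
noncomputable section

local notation "E3" => EuclideanSpace ℝ (Fin 3)

/-- The six edges of the two triangles `conv{p 0, p 1, p 2}` and `conv{p 3, p 4, p 5}`,
each listed as a pair of endpoints. -/
def triEdges (p : Fin 6 → E3) : Fin 6 → E3 × E3 :=
  ![(p 0, p 1), (p 1, p 2), (p 0, p 2), (p 3, p 4), (p 4, p 5), (p 3, p 5)]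

open Finset AffineMap

namespace TriAux

variable {E : Type*} [NormedAddCommGroup E] [NormedSpace ℝ E]
variable (q : AffineBasis (Fin 4) ℝ E)

lemma point_eq (x : E) : x = ∑ i, q.coord i x • q i := by
  have h := q.affineCombination_coord_eq_self x
  rwa [Finset.univ.affineCombination_eq_linear_combination _ _
    (q.sum_coord_apply_eq_one x), eq_comm] at h

lemma coord_combo (w : Fin 4 → ℝ) (hw : ∑ i, w i = 1) (j : Fin 4) :
    q.coord j (∑ i, w i • q i) = w j := by
  rw [← Finset.univ.affineCombination_eq_linear_combination _ _ hw]
  exact q.coord_apply_combination_of_mem (Finset.mem_univ j) hw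

lemma mem_tri (x : E) : x ∈ convexHull ℝ ({q 0, q 1, q 2} : Set E) ↔
    0 ≤ q.coord 0 x ∧ 0 ≤ q.coord 1 x ∧ 0 ≤ q.coord 2 x ∧ q.coord 3 x = 0 := by
  constructor
  · intro hx
    have hconv : Convex ℝ {y : E | 0 ≤ q.coord 0 y ∧ 0 ≤ q.coord 1 y ∧ 0 ≤ q.coord 2 y ∧
        q.coord 3 y = 0} := by
      have he : {y : E | 0 ≤ q.coord 0 y ∧ 0 ≤ q.coord 1 y ∧ 0 ≤ q.coord 2 y ∧
          q.coord 3 y = 0} = (q.coord 0) ⁻¹' (Set.Ici 0) ∩ ((q.coord 1) ⁻¹' (Set.Ici 0) ∩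
          ((q.coord 2) ⁻¹' (Set.Ici 0) ∩ (q.coord 3) ⁻¹' {0})) := by
        ext y; simp [Set.mem_Ici, and_assoc]
      rw [he]
      exact ((convex_Ici (0:ℝ)).affine_preimage (q.coord 0)).inter
        (((convex_Ici (0:ℝ)).affine_preimage (q.coord 1)).inter
        (((convex_Ici (0:ℝ)).affine_preimage (q.coord 2)).inter
        ((convex_singleton (0:ℝ)).affine_preimage (q.coord 3))))
    refine convexHull_min ?_ hconv hx
    rintro y hy
    simp only [Set.mem_insert_iff, Set.mem_singleton_iff] at hy
    rcases hy with rfl | rfl | rfl <;>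
      refine ⟨?_, ?_, ?_, ?_⟩ <;> simp [AffineBasis.coord_apply]
  · rintro ⟨h0, h1, h2, h3⟩
    have hx := point_eq q x
    have hsum4 := q.sum_coord_apply_eq_one x
    rw [Fin.sum_univ_four] at hsum4
    have hmem : ∀ i ∈ ({0, 1, 2} : Finset (Fin 4)), q i ∈ ({q 0, q 1, q 2} : Set E) := by
      intro i hi; fin_cases hi <;> simp
    have hnn : ∀ i ∈ ({0, 1, 2} : Finset (Fin 4)), 0 ≤ q.coord i x := by
      intro i hi; fin_cases hi <;> assumption
    have hsum : ∑ i ∈ ({0, 1, 2} : Finset (Fin 4)), q.coord i x = 1 := by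
      rw [show ({0,1,2} : Finset (Fin 4)) = {0} ∪ {1} ∪ {2} by rfl]
      rw [Finset.sum_union (by decide), Finset.sum_union (by decide)]
      simp only [Finset.sum_singleton]
      linarith
    have hcm := Finset.centerMass_mem_convexHull ({0,1,2} : Finset (Fin 4)) hnn
      (by rw [hsum]; norm_num) hmem
    have hcm2 : ({0,1,2} : Finset (Fin 4)).centerMass (fun i => q.coord i x) q = x := by
      rw [Finset.centerMass_eq_of_sum_1 _ _ hsum]
      rw [show ({0,1,2} : Finset (Fin 4)) = {0} ∪ {1} ∪ {2} by rfl]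
      rw [Finset.sum_union (by decide), Finset.sum_union (by decide)]
      simp only [Finset.sum_singleton]
      conv_rhs => rw [point_eq q x]
      rw [Fin.sum_univ_four, h3, zero_smul, add_zero]
    rwa [hcm2] at hcm

lemma range_vec3 : Set.range ![q 0, q 1, q 2] = ({q 0, q 1, q 2} : Set E) := by
  ext y
  constructor
  · rintro ⟨i, rfl⟩; fin_cases i <;> simp
  · rintro (rfl | rfl | rfl)
    exacts [⟨0, rfl⟩, ⟨1, rfl⟩, ⟨2, rfl⟩]

lemma mem_plane (x : E) : x ∈ affineSpan ℝ ({q 0, q 1, q 2} : Set E) ↔ q.coord 3 x = 0 := by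
  constructor
  · intro hx
    rw [← range_vec3 q] at hx
    obtain ⟨w, hw, hxw⟩ := eq_affineCombination_of_mem_affineSpan_of_fintype hx
    rw [Finset.univ.affineCombination_eq_linear_combination _ _ hw, Fin.sum_univ_three] at hxw
    rw [Fin.sum_univ_three] at hw
    have hx4 : x = ∑ i, (![w 0, w 1, w 2, 0] : Fin 4 → ℝ) i • q i := by
      rw [Fin.sum_univ_four]
      simpa using hxw
    rw [hx4, coord_combo q _ (by rw [Fin.sum_univ_four]; simpa using hw)]
    simp
  · intro h3
    have hsum3 : ∑ i : Fin 3, (![q.coord 0 x, q.coord 1 x, q.coord 2 x] : Fin 3 → ℝ) i = 1 := by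
      have hs := q.sum_coord_apply_eq_one x
      rw [Fin.sum_univ_four] at hs
      rw [Fin.sum_univ_three]
      simp only [Matrix.cons_val_zero, Matrix.cons_val_one, Matrix.head_cons,
        Matrix.cons_val_two, Matrix.tail_cons]
      linarith
    have hx3 : x = Finset.univ.affineCombination ℝ ![q 0, q 1, q 2]
        ![q.coord 0 x, q.coord 1 x, q.coord 2 x] := by
      rw [Finset.univ.affineCombination_eq_linear_combination _ _ hsum3, Fin.sum_univ_three]
      conv_lhs => rw [point_eq q x]
      rw [Fin.sum_univ_four, h3, zero_smul, add_zero]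
      simp
    rw [hx3, ← range_vec3 q]
    exact affineCombination_mem_affineSpan hsum3 _

lemma seg_iff (i j : Fin 4) (hij : i ≠ j) (x : E) :
    x ∈ segment ℝ (q i) (q j) ↔
      0 ≤ q.coord i x ∧ 0 ≤ q.coord j x ∧ ∀ m, m ≠ i → m ≠ j → q.coord m x = 0 := by
  constructor
  · intro hx
    rw [segment_eq_image_lineMap] at hx
    obtain ⟨t, ht, rfl⟩ := hx
    have hev : ∀ m, q.coord m (AffineMap.lineMap (q i) (q j) t) =
        (1 - t) * (if m = i then 1 else 0) + t * (if m = j then 1 else 0) := by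
      intro m
      rw [AffineMap.apply_lineMap, AffineMap.lineMap_apply_module]
      simp [AffineBasis.coord_apply, smul_eq_mul]
    refine ⟨?_, ?_, ?_⟩
    · rw [hev i]; simp [hij]; linarith [ht.1, ht.2]
    · rw [hev j]; simp [Ne.symm hij]; linarith [ht.1, ht.2]
    · intro m hmi hmj; rw [hev m]; simp [hmi, hmj]
  · rintro ⟨hi, hj, hz⟩
    have hsum := q.sum_coord_apply_eq_one x
    have hsub : ({i, j} : Finset (Fin 4)) ⊆ Finset.univ := Finset.subset_univ _
    have hvan : ∀ m ∈ Finset.univ, m ∉ ({i, j} : Finset (Fin 4)) → q.coord m x = 0 := by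
      intro m _ hm
      simp only [Finset.mem_insert, Finset.mem_singleton, not_or] at hm
      exact hz m hm.1 hm.2
    have hij1 : q.coord i x + q.coord j x = 1 := by
      rw [← hsum, ← Finset.sum_subset hsub hvan,
        Finset.sum_insert (by simp [hij]), Finset.sum_singleton]
    have hvan2 : ∀ m ∈ Finset.univ, m ∉ ({i, j} : Finset (Fin 4)) → q.coord m x • q m = 0 := by
      intro m hm1 hm2; rw [hvan m hm1 hm2, zero_smul]
    have hxl : x = q.coord i x • q i + q.coord j x • q j := by
      conv_lhs => rw [point_eq q x]
      rw [← Finset.sum_subset hsub hvan2,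
        Finset.sum_insert (by simp [hij]), Finset.sum_singleton]
    exact ⟨q.coord i x, q.coord j x, hi, hj, hij1, hxl.symm⟩

lemma openSeg_iff (i j : Fin 4) (hij : i ≠ j) (x : E) :
    x ∈ openSegment ℝ (q i) (q j) ↔
      0 < q.coord i x ∧ 0 < q.coord j x ∧ ∀ m, m ≠ i → m ≠ j → q.coord m x = 0 := by
  constructor
  · intro hx
    rw [openSegment_eq_image_lineMap] at hx
    obtain ⟨t, ht, rfl⟩ := hx
    have hev : ∀ m, q.coord m (AffineMap.lineMap (q i) (q j) t) =
        (1 - t) * (if m = i then 1 else 0) + t * (if m = j then 1 else 0) := by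
      intro m
      rw [AffineMap.apply_lineMap, AffineMap.lineMap_apply_module]
      simp [AffineBasis.coord_apply, smul_eq_mul]
    refine ⟨?_, ?_, ?_⟩
    · rw [hev i]; simp [hij]; linarith [ht.1, ht.2]
    · rw [hev j]; simp [Ne.symm hij]; linarith [ht.1, ht.2]
    · intro m hmi hmj; rw [hev m]; simp [hmi, hmj]
  · rintro ⟨hi, hj, hz⟩
    have hx' := (seg_iff q i j hij x).2 ⟨hi.le, hj.le, hz⟩
    obtain ⟨a, b, ha, hb, hab, hx⟩ := hx'
    refine ⟨a, b, ?_, ?_, hab, hx⟩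
    · rcases ha.lt_or_eq with h | h
      · exact h
      · exfalso
        have : x = q j := by rw [← hx, ← h]; simp [show b = 1 by linarith]
        rw [this] at hi
        rw [q.coord_apply_ne hij] at hi
        exact lt_irrefl _ hi
    · rcases hb.lt_or_eq with h | h
      · exact h
      · exfalso
        have : x = q i := by rw [← hx, ← h]; simp [show a = 1 by linarith]
        rw [this] at hj
        rw [q.coord_apply_ne (Ne.symm hij)] at hj
        exact lt_irrefl _ hj

lemma coordL3_dir (w : E) (hw : w ∈ (affineSpan ℝ ({q 0, q 1, q 2} : Set E)).direction) :
    (q.coord 3).linear w = 0 := by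
  have h0 : q 0 ∈ affineSpan ℝ ({q 0, q 1, q 2} : Set E) :=
    subset_affineSpan _ _ (by simp)
  have h1 : w +ᵥ q 0 ∈ affineSpan ℝ ({q 0, q 1, q 2} : Set E) :=
    AffineSubspace.vadd_mem_of_mem_direction hw h0
  have e1 := (mem_plane q _).1 h1
  rw [AffineMap.map_vadd] at e1
  have e0 := (mem_plane q _).1 h0
  simpa [vadd_eq_add, e0] using e1

lemma indep3 : AffineIndependent ℝ ![q 0, q 1, q 2] := by
  have h := q.ind.comp_embedding (⟨Fin.castSucc, Fin.castSucc_injective 3⟩ : Fin 3 ↪ Fin 4)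
  have he : ![q 0, q 1, q 2] = (⇑q ∘ fun m : Fin 3 => Fin.castSucc m) := by
    funext m; fin_cases m <;> rfl
  rw [he]
  exact h

lemma finrank_dir [FiniteDimensional ℝ E] :
    Module.finrank ℝ (affineSpan ℝ ({q 0, q 1, q 2} : Set E)).direction = 2 := by
  rw [direction_affineSpan, ← range_vec3 q]
  exact (indep3 q).finrank_vectorSpan (by simp)

lemma relint_iff [FiniteDimensional ℝ E] (x : E) :
    x ∈ intrinsicInterior ℝ (convexHull ℝ ({q 0, q 1, q 2} : Set E)) ↔
      0 < q.coord 0 x ∧ 0 < q.coord 1 x ∧ 0 < q.coord 2 x ∧ q.coord 3 x = 0 := by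
  set T : Set E := convexHull ℝ ({q 0, q 1, q 2} : Set E) with hT
  have hspan : ∀ y : E, y ∈ affineSpan ℝ T ↔ q.coord 3 y = 0 := by
    intro y
    rw [hT, affineSpan_convexHull]
    exact mem_plane q y
  constructor
  · intro hx
    obtain ⟨y, hy, rfl⟩ := mem_intrinsicInterior.1 hx
    have hxT : (y : E) ∈ T := by have := interior_subset hy; exact this
    obtain ⟨h0, h1, h2, h3⟩ := (mem_tri q _).1 hxT
    have key : ∀ i : Fin 4, q i ∈ T → (∀ z ∈ T, 0 ≤ q.coord i z) →
        q.coord i (y : E) = 0 → False := by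
      intro i hiT hge0 hzero
      have hmem : ∀ t : ℝ, t • ((y : E) - q i) + (y : E) ∈ affineSpan ℝ T := by
        intro t
        have h1' : (y : E) ∈ affineSpan ℝ T := y.2
        have h2' : q i ∈ affineSpan ℝ T := subset_affineSpan ℝ T hiT
        have := AffineSubspace.smul_vsub_vadd_mem (affineSpan ℝ T) t h1' h2' h1'
        simpa [vsub_eq_sub, vadd_eq_add] using this
      set γ : ℝ → affineSpan ℝ T := fun t => ⟨_, hmem t⟩ with hγ
      have hcont : Continuous γ := by
        apply Continuous.subtype_mk
        exact (continuous_id.smul continuous_const).add continuous_const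
      have hγ0 : γ 0 = y := by
        apply Subtype.ext; simp [hγ]
      have hnb : γ ⁻¹' interior ((↑) ⁻¹' T : Set (affineSpan ℝ T)) ∈ nhds (0 : ℝ) :=
        hcont.continuousAt.preimage_mem_nhds (isOpen_interior.mem_nhds (hγ0 ▸ hy))
      have hev : ∀ᶠ t in nhdsWithin (0 : ℝ) (Set.Ioi 0),
          γ t ∈ interior ((↑) ⁻¹' T : Set (affineSpan ℝ T)) :=
        mem_nhdsWithin_of_mem_nhds hnb
      obtain ⟨t, htmem, htpos⟩ := (hev.and self_mem_nhdsWithin).exists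
      have hTt : t • ((y : E) - q i) + (y : E) ∈ T := by
        have := interior_subset htmem; exact this
      have hcoord : q.coord i (t • ((y : E) - q i) + (y : E)) = -t := by
        rw [show (t • ((y : E) - q i) + (y : E)) = (t • ((y : E) -ᵥ q i)) +ᵥ (y : E) by
          simp [vsub_eq_sub, vadd_eq_add]]
        rw [AffineMap.map_vadd, map_smul, AffineMap.linearMap_vsub]
        simp [hzero, q.coord_apply_eq, vsub_eq_sub, vadd_eq_add, smul_eq_mul]
      have hge : 0 ≤ q.coord i (t • ((y : E) - q i) + (y : E)) := hge0 _ hTt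
      rw [hcoord] at hge
      have : t ∈ Set.Ioi (0:ℝ) := htpos
      simp at this
      linarith
    refine ⟨?_, ?_, ?_, h3⟩
    · rcases h0.lt_or_eq with h | h
      · exact h
      · exact absurd (key 0 (subset_convexHull ℝ _ (by simp))
          (fun z hz => ((mem_tri q z).1 hz).1) h.symm) (by simp)
    · rcases h1.lt_or_eq with h | h
      · exact h
      · exact absurd (key 1 (subset_convexHull ℝ _ (by simp))
          (fun z hz => ((mem_tri q z).1 hz).2.1) h.symm) (by simp)
    · rcases h2.lt_or_eq with h | h
      · exact h
      · exact absurd (key 2 (subset_convexHull ℝ _ (by simp))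
          (fun z hz => ((mem_tri q z).1 hz).2.2.1) h.symm) (by simp)
  · rintro ⟨h0, h1, h2, h3⟩
    have hxT : x ∈ T := (mem_tri q x).2 ⟨h0.le, h1.le, h2.le, h3⟩
    have hxN : x ∈ affineSpan ℝ T := subset_affineSpan ℝ T hxT
    rw [mem_intrinsicInterior]
    refine ⟨⟨x, hxN⟩, ?_, rfl⟩
    have hc : ∀ m : Fin 4, Continuous fun z : affineSpan ℝ T => q.coord m (z : E) :=
      fun m => ((q.coord m).continuous_of_finiteDimensional).comp continuous_subtype_val
    have hU : IsOpen {z : affineSpan ℝ T |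
        0 < q.coord 0 (z : E) ∧ 0 < q.coord 1 (z : E) ∧ 0 < q.coord 2 (z : E)} := by
      have he : {z : affineSpan ℝ T |
          0 < q.coord 0 (z : E) ∧ 0 < q.coord 1 (z : E) ∧ 0 < q.coord 2 (z : E)} =
          {z : affineSpan ℝ T | 0 < q.coord 0 (z : E)} ∩
          ({z : affineSpan ℝ T | 0 < q.coord 1 (z : E)} ∩
          {z : affineSpan ℝ T | 0 < q.coord 2 (z : E)}) := rfl
      rw [he]
      exact (isOpen_lt continuous_const (hc 0)).inter
        ((isOpen_lt continuous_const (hc 1)).inter (isOpen_lt continuous_const (hc 2)))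
    have hUsub : {z : affineSpan ℝ T |
        0 < q.coord 0 (z : E) ∧ 0 < q.coord 1 (z : E) ∧ 0 < q.coord 2 (z : E)} ⊆
        ((↑) ⁻¹' T : Set (affineSpan ℝ T)) := by
      rintro z ⟨hz0, hz1, hz2⟩
      exact (mem_tri q _).2 ⟨hz0.le, hz1.le, hz2.le, (hspan _).1 z.2⟩
    exact hU.subset_interior_iff.mpr hUsub ⟨h0, h1, h2⟩

lemma range3 {α : Type*} (x y z : α) : Set.range ![x, y, z] = {x, y, z} := by
  ext w
  constructor
  · rintro ⟨i, rfl⟩; fin_cases i <;> simp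
  · rintro (rfl | rfl | rfl)
    exacts [⟨0, rfl⟩, ⟨1, rfl⟩, ⟨2, rfl⟩]

lemma affine_line_eval (ψ : ℝ →ᵃ[ℝ] ℝ) (s t : ℝ) : ψ s = (s - t) * ψ.linear 1 + ψ t := by
  have h := ψ.map_vadd t (s - t)
  rw [show (s - t) +ᵥ t = s by rw [vadd_eq_add]; ring] at h
  rw [h, show ψ.linear (s - t) = (s - t) * ψ.linear 1 by
    rw [show (s - t) = (s - t) • (1 : ℝ) by simp, map_smul]; simp [smul_eq_mul], vadd_eq_add]

lemma endpoints_mem (Q : AffineSubspace ℝ E) (a b u v : E) (huv : u ≠ v)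
    (hu : u ∈ segment ℝ a b) (hv : v ∈ segment ℝ a b)
    (hQu : u ∈ Q) (hQv : v ∈ Q) : a ∈ Q ∧ b ∈ Q := by
  rw [segment_eq_image_lineMap] at hu hv
  obtain ⟨s, _, hus⟩ := hu
  obtain ⟨t, _, hvt⟩ := hv
  rw [AffineMap.lineMap_apply_module] at hus hvt
  have hst : s ≠ t := by
    intro h
    apply huv
    rw [← hus, ← hvt, h]
  have hts : t - s ≠ 0 := sub_ne_zero.2 (Ne.symm hst)
  have ha : a = (-s / (t - s)) • (v - u) + u := by
    rw [← hus, ← hvt]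
    match_scalars <;> field_simp <;> ring
  have hb : b = ((1 - s) / (t - s)) • (v - u) + u := by
    rw [← hus, ← hvt]
    match_scalars <;> field_simp <;> ring
  constructor
  · rw [ha]
    have h := AffineSubspace.smul_vsub_vadd_mem Q (-s / (t - s)) hQv hQu hQu
    simpa [vsub_eq_sub, vadd_eq_add] using h
  · rw [hb]
    have h := AffineSubspace.smul_vsub_vadd_mem Q ((1 - s) / (t - s)) hQv hQu hQu
    simpa [vsub_eq_sub, vadd_eq_add] using h

lemma chain_notmem {α : Type*} [DecidableEq α] {i j l m : α}
    (h : ({i, j, l, m} : Finset α).card = 4) :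
    i ∉ ({j, l, m} : Finset α) ∧ j ∉ ({l, m} : Finset α) ∧ l ∉ ({m} : Finset α) := by
  refine ⟨?_, ?_, ?_⟩ <;> intro hmem
  · rw [show ({i, j, l, m} : Finset α) = insert i {j, l, m} from rfl,
      Finset.insert_eq_self.2 hmem] at h
    have h3 : ({j, l, m} : Finset α).card ≤ 3 :=
      le_trans (Finset.card_insert_le _ _)
        (le_trans (Nat.add_le_add_right (Finset.card_insert_le _ _) 1) (by simp))
    omega
  · rw [show ({i, j, l, m} : Finset α) = insert i (insert j {l, m}) from rfl,
      Finset.insert_eq_self.2 hmem] at h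
    have h2 : ({l, m} : Finset α).card ≤ 2 :=
      le_trans (Finset.card_insert_le _ _) (by simp)
    have := Finset.card_insert_le i ({l, m} : Finset α)
    omega
  · rw [show ({i, j, l, m} : Finset α) = insert i (insert j (insert l {m})) from rfl,
      Finset.insert_eq_self.2 hmem] at h
    have h1 : (insert j ({m} : Finset α)).card ≤ 2 :=
      le_trans (Finset.card_insert_le _ _) (by simp)
    have := Finset.card_insert_le i (insert j ({m} : Finset α))
    omega

section PLevel

variable (p : Fin 6 → EuclideanSpace ℝ (Fin 3))
variable (hgp : ∀ s : Finset (Fin 6), s.card = 4 → AffineIndependent ℝ (fun i : s => p i.1))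

include hgp in
lemma indep4 (v : Fin 4 → Fin 6) (hv : Function.Injective v) :
    AffineIndependent ℝ (fun m => p (v m)) := by
  classical
  set s : Finset (Fin 6) := Finset.univ.image v with hs
  have hcard : s.card = 4 := by
    rw [hs, Finset.card_image_of_injective _ hv]; simp
  have h := hgp s hcard
  have hmem : ∀ m, v m ∈ s := fun m => Finset.mem_image.2 ⟨m, Finset.mem_univ m, rfl⟩
  exact h.comp_embedding
    ⟨fun m => (⟨v m, hmem m⟩ : s), fun a b hab => hv (by simpa using hab)⟩

def triBasis (v : Fin 4 → Fin 6) (h : AffineIndependent ℝ (fun m => p (v m))) :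
    AffineBasis (Fin 4) ℝ (EuclideanSpace ℝ (Fin 3)) :=
  ⟨fun m => p (v m), h, by
    rw [h.affineSpan_eq_top_iff_card_eq_finrank_add_one]
    simp [finrank_euclideanSpace_fin]⟩

@[simp] lemma triBasis_apply (v : Fin 4 → Fin 6) (h) (m : Fin 4) :
    triBasis p v h m = p (v m) := rfl

include hgp in
lemma noCross (i j k l : Fin 6) (hv : Function.Injective ![i, j, k, l])
    (x : EuclideanSpace ℝ (Fin 3))
    (h1 : x ∈ segment ℝ (p i) (p j)) (h2 : x ∈ segment ℝ (p k) (p l)) : False := by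
  have hind := indep4 p hgp ![i, j, k, l] hv
  obtain ⟨a, b, ha, hb, hab, hx1⟩ := h1
  obtain ⟨c, d, hc, hd, hcd, hx2⟩ := h2
  have hsum : ∑ m, (![a, b, -c, -d] : Fin 4 → ℝ) m = 0 := by
    rw [Fin.sum_univ_four]
    show a + b + -c + -d = 0
    linarith
  have hcomb : ∑ m, (![a, b, -c, -d] : Fin 4 → ℝ) m • (fun m => p (![i, j, k, l] m)) m = 0 := by
    rw [Fin.sum_univ_four]
    show a • p i + b • p j + (-c) • p k + (-d) • p l = 0
    rw [neg_smul, neg_smul]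
    have : a • p i + b • p j = c • p k + d • p l := by rw [hx1, hx2]
    rw [show a • p i + b • p j + -(c • p k) + -(d • p l)
        = (a • p i + b • p j) - (c • p k + d • p l) by abel, this]
    simp
  have h0 := affineIndependent_iff.1 hind Finset.univ _ hsum hcomb 0 (Finset.mem_univ _)
  have h1' := affineIndependent_iff.1 hind Finset.univ _ hsum hcomb 1 (Finset.mem_univ _)
  show False
  have e0 : a = 0 := h0
  have e1 : b = 0 := h1'
  linarith

include hgp in
lemma notInSpan (i j k l : Fin 6) (hv : Function.Injective ![i, j, k, l]) :
    p l ∉ affineSpan ℝ ({p i, p j, p k} : Set (EuclideanSpace ℝ (Fin 3))) := by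
  intro hmem
  rw [← range3 (p i) (p j) (p k)] at hmem
  obtain ⟨w, hw, hlw⟩ := eq_affineCombination_of_mem_affineSpan_of_fintype hmem
  rw [Finset.univ.affineCombination_eq_linear_combination _ _ hw, Fin.sum_univ_three] at hlw
  rw [Fin.sum_univ_three] at hw
  have hind := indep4 p hgp ![i, j, k, l] hv
  have hsum : ∑ m, (![w 0, w 1, w 2, -1] : Fin 4 → ℝ) m = 0 := by
    rw [Fin.sum_univ_four]
    show w 0 + w 1 + w 2 + -1 = 0
    linarith
  have hcomb : ∑ m, (![w 0, w 1, w 2, -1] : Fin 4 → ℝ) m •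
      (fun m => p (![i, j, k, l] m)) m = 0 := by
    rw [Fin.sum_univ_four]
    show w 0 • p i + w 1 • p j + w 2 • p k + (-1 : ℝ) • p l = 0
    have : w 0 • p i + w 1 • p j + w 2 • p k = p l := by
      simpa using hlw.symm
    rw [this]
    simp
  have h3 := affineIndependent_iff.1 hind Finset.univ _ hsum hcomb 3 (Finset.mem_univ _)
  have : (-1 : ℝ) = 0 := h3
  norm_num at this

end PLevel
end TriAux


set_option maxHeartbeats 4000000 in
/-- Let `T₁ = conv{p 0, p 1, p 2}` and `T₂ = conv{p 3, p 4, p 5}` be two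
closed triangles in `ℝ³` whose six vertices are in general position (any four of them are
affinely independent, i.e. no four are coplanar).  If `T₁ ∩ T₂ ≠ ∅`, then `T₁ ∩ T₂` is a
nondegenerate closed line segment, and exactly two of the six edges of the two triangles
pierce the respective other triangle (an edge pierces the other triangle when its open
segment meets the relative interior of the other triangle). -/
theorem triangle_intersection_segment_and_two_piercing_edges (p : Fin 6 → E3)
    (hgp : ∀ s : Finset (Fin 6), s.card = 4 → AffineIndependent ℝ (fun i : s => p i.1))
    (T₁ T₂ : Set E3)
    (hT₁ : T₁ = convexHull ℝ {p 0, p 1, p 2})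
    (hT₂ : T₂ = convexHull ℝ {p 3, p 4, p 5})
    (hne : (T₁ ∩ T₂).Nonempty) :
    (∃ x y : E3, x ≠ y ∧ T₁ ∩ T₂ = segment ℝ x y) ∧
    Nat.card {i : Fin 6 //
      (openSegment ℝ (triEdges p i).1 (triEdges p i).2 ∩
        intrinsicInterior ℝ (if (i : ℕ) < 3 then T₂ else T₁)).Nonempty} = 2 := by
  classical
  subst hT₁ hT₂
  obtain ⟨z, hz⟩ := hne
  have h₁ := TriAux.indep4 p hgp ![0, 1, 2, 3] (by decide)
  have h₂ := TriAux.indep4 p hgp ![3, 4, 5, 0] (by decide)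
  set B₁ : AffineBasis (Fin 4) ℝ (EuclideanSpace ℝ (Fin 3)) :=
    TriAux.triBasis p ![0, 1, 2, 3] h₁ with hB₁
  set B₂ : AffineBasis (Fin 4) ℝ (EuclideanSpace ℝ (Fin 3)) :=
    TriAux.triBasis p ![3, 4, 5, 0] h₂ with hB₂
  set hull1 : Set E3 := convexHull ℝ ({p 0, p 1, p 2} : Set E3) with hh1
  set hull2 : Set E3 := convexHull ℝ ({p 3, p 4, p 5} : Set E3) with hh2
  set S : Set E3 := hull1 ∩ hull2 with hS
  set φ : Fin 6 → (E3 →ᵃ[ℝ] ℝ) :=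
    ![B₁.coord 0, B₁.coord 1, B₁.coord 2, B₂.coord 0, B₂.coord 1, B₂.coord 2] with hφ
  have hmem1 : ∀ x : E3, x ∈ hull1 ↔
      0 ≤ B₁.coord 0 x ∧ 0 ≤ B₁.coord 1 x ∧ 0 ≤ B₁.coord 2 x ∧ B₁.coord 3 x = 0 :=
    fun x => TriAux.mem_tri B₁ x
  have hmem2 : ∀ x : E3, x ∈ hull2 ↔
      0 ≤ B₂.coord 0 x ∧ 0 ≤ B₂.coord 1 x ∧ 0 ≤ B₂.coord 2 x ∧ B₂.coord 3 x = 0 :=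
    fun x => TriAux.mem_tri B₂ x
  have hplane1 : ∀ x : E3, x ∈ affineSpan ℝ ({p 0, p 1, p 2} : Set E3) ↔ B₁.coord 3 x = 0 :=
    fun x => TriAux.mem_plane B₁ x
  have hplane2 : ∀ x : E3, x ∈ affineSpan ℝ ({p 3, p 4, p 5} : Set E3) ↔ B₂.coord 3 x = 0 :=
    fun x => TriAux.mem_plane B₂ x
  have hrelint1 : ∀ x : E3, x ∈ intrinsicInterior ℝ hull1 ↔
      0 < B₁.coord 0 x ∧ 0 < B₁.coord 1 x ∧ 0 < B₁.coord 2 x ∧ B₁.coord 3 x = 0 :=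
    fun x => TriAux.relint_iff B₁ x
  have hrelint2 : ∀ x : E3, x ∈ intrinsicInterior ℝ hull2 ↔
      0 < B₂.coord 0 x ∧ 0 < B₂.coord 1 x ∧ 0 < B₂.coord 2 x ∧ B₂.coord 3 x = 0 :=
    fun x => TriAux.relint_iff B₂ x
  have hSmem : ∀ x : E3, x ∈ S ↔
      (∀ k : Fin 6, 0 ≤ φ k x) ∧ B₁.coord 3 x = 0 ∧ B₂.coord 3 x = 0 := by
    intro x
    constructor
    · rintro ⟨hx1, hx2⟩
      obtain ⟨a0, a1, a2, a3⟩ := (hmem1 x).1 hx1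
      obtain ⟨b0, b1, b2, b3⟩ := (hmem2 x).1 hx2
      refine ⟨?_, a3, b3⟩
      intro k
      fin_cases k
      exacts [a0, a1, a2, b0, b1, b2]
    · rintro ⟨hk, h3, h3'⟩
      exact ⟨(hmem1 x).2 ⟨hk 0, hk 1, hk 2, h3⟩, (hmem2 x).2 ⟨hk 3, hk 4, hk 5, h3'⟩⟩
  set eMap : Fin 6 → Fin 6 := ![1, 2, 0, 4, 5, 3] with hE
  -- every vanishing coordinate puts the point on the corresponding edge
  have hA : ∀ x ∈ S, ∀ k : Fin 6, φ k x = 0 →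
      x ∈ segment ℝ (triEdges p (eMap k)).1 (triEdges p (eMap k)).2 := by
    intro x hx k hk
    obtain ⟨hnn, hc3, hd3⟩ := (hSmem x).1 hx
    fin_cases k
    · show x ∈ segment ℝ (p 1) (p 2)
      refine (TriAux.seg_iff B₁ 1 2 (by decide) x).2 ⟨hnn 1, hnn 2, ?_⟩
      intro m h1' h2'
      fin_cases m
      · exact hk
      · exact absurd rfl h1'
      · exact absurd rfl h2'
      · exact hc3
    · show x ∈ segment ℝ (p 0) (p 2)
      refine (TriAux.seg_iff B₁ 0 2 (by decide) x).2 ⟨hnn 0, hnn 2, ?_⟩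
      intro m h1' h2'
      fin_cases m
      · exact absurd rfl h1'
      · exact hk
      · exact absurd rfl h2'
      · exact hc3
    · show x ∈ segment ℝ (p 0) (p 1)
      refine (TriAux.seg_iff B₁ 0 1 (by decide) x).2 ⟨hnn 0, hnn 1, ?_⟩
      intro m h1' h2'
      fin_cases m
      · exact absurd rfl h1'
      · exact absurd rfl h2'
      · exact hk
      · exact hc3
    · show x ∈ segment ℝ (p 4) (p 5)
      refine (TriAux.seg_iff B₂ 1 2 (by decide) x).2 ⟨hnn 4, hnn 5, ?_⟩
      intro m h1' h2'
      fin_cases m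
      · exact hk
      · exact absurd rfl h1'
      · exact absurd rfl h2'
      · exact hd3
    · show x ∈ segment ℝ (p 3) (p 5)
      refine (TriAux.seg_iff B₂ 0 2 (by decide) x).2 ⟨hnn 3, hnn 5, ?_⟩
      intro m h1' h2'
      fin_cases m
      · exact absurd rfl h1'
      · exact hk
      · exact absurd rfl h2'
      · exact hd3
    · show x ∈ segment ℝ (p 3) (p 4)
      refine (TriAux.seg_iff B₂ 0 1 (by decide) x).2 ⟨hnn 3, hnn 4, ?_⟩
      intro m h1' h2'
      fin_cases m
      · exact absurd rfl h1'
      · exact absurd rfl h2'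
      · exact hk
      · exact hd3
  -- same-side double zeros force a vertex of one triangle into the other plane
  have hx2span : ∀ x ∈ S, x ∈ affineSpan ℝ ({p 3, p 4, p 5} : Set E3) := by
    intro x hx
    rw [← affineSpan_convexHull]
    exact subset_affineSpan ℝ _ hx.2
  have hx1span : ∀ x ∈ S, x ∈ affineSpan ℝ ({p 0, p 1, p 2} : Set E3) := by
    intro x hx
    rw [← affineSpan_convexHull]
    exact subset_affineSpan ℝ _ hx.1
  have hV1 : ∀ x ∈ S, ∀ (i j l : Fin 4) (m : Fin 6),
      ({i, j, l, 3} : Finset (Fin 4)) = Finset.univ → B₁ l = p m →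
      p m ∉ affineSpan ℝ ({p 3, p 4, p 5} : Set E3) →
      B₁.coord i x = 0 → B₁.coord j x = 0 → False := by
    intro x hx i j l m huniv hlm hnot hzi hzj
    have hc3 : B₁.coord 3 x = 0 := ((hSmem x).1 hx).2.1
    have hcard : ({i, j, l, 3} : Finset (Fin 4)).card = 4 := by rw [huniv]; simp
    obtain ⟨hi1, hj1, hl1⟩ := TriAux.chain_notmem hcard
    have hsum := B₁.sum_coord_apply_eq_one x
    rw [← huniv, Finset.sum_insert hi1, Finset.sum_insert hj1, Finset.sum_insert hl1,
      Finset.sum_singleton] at hsum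
    have hcl : B₁.coord l x = 1 := by rw [hzi, hzj, hc3] at hsum; linarith
    have hxe : x = B₁ l := by
      have hpe := TriAux.point_eq B₁ x
      rw [← huniv, Finset.sum_insert hi1, Finset.sum_insert hj1, Finset.sum_insert hl1,
        Finset.sum_singleton, hzi, hzj, hc3, hcl] at hpe
      simpa using hpe
    apply hnot
    rw [← hlm, ← hxe]
    exact hx2span x hx
  have hV2 : ∀ x ∈ S, ∀ (i j l : Fin 4) (m : Fin 6),
      ({i, j, l, 3} : Finset (Fin 4)) = Finset.univ → B₂ l = p m →
      p m ∉ affineSpan ℝ ({p 0, p 1, p 2} : Set E3) →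
      B₂.coord i x = 0 → B₂.coord j x = 0 → False := by
    intro x hx i j l m huniv hlm hnot hzi hzj
    have hc3 : B₂.coord 3 x = 0 := ((hSmem x).1 hx).2.2
    have hcard : ({i, j, l, 3} : Finset (Fin 4)).card = 4 := by rw [huniv]; simp
    obtain ⟨hi1, hj1, hl1⟩ := TriAux.chain_notmem hcard
    have hsum := B₂.sum_coord_apply_eq_one x
    rw [← huniv, Finset.sum_insert hi1, Finset.sum_insert hj1, Finset.sum_insert hl1,
      Finset.sum_singleton] at hsum
    have hcl : B₂.coord l x = 1 := by rw [hzi, hzj, hc3] at hsum; linarith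
    have hxe : x = B₂ l := by
      have hpe := TriAux.point_eq B₂ x
      rw [← huniv, Finset.sum_insert hi1, Finset.sum_insert hj1, Finset.sum_insert hl1,
        Finset.sum_singleton, hzi, hzj, hc3, hcl] at hpe
      simpa using hpe
    apply hnot
    rw [← hlm, ← hxe]
    exact hx1span x hx
  have hAMO : ∀ x ∈ S, ∀ k k' : Fin 6, k ≠ k' → φ k x = 0 → φ k' x = 0 → False := by
    intro x hx k k' hkk hk hk'
    have hseg := hA x hx
    fin_cases k <;> fin_cases k'
    · exact hkk rfl
    · exact hV1 x hx 0 1 2 2 (by decide) rfl (TriAux.notInSpan p hgp 3 4 5 2 (by decide)) hk hk'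
    · exact hV1 x hx 0 2 1 1 (by decide) rfl (TriAux.notInSpan p hgp 3 4 5 1 (by decide)) hk hk'
    · exact TriAux.noCross p hgp 1 2 4 5 (by decide) x (hseg 0 hk) (hseg 3 hk')
    · exact TriAux.noCross p hgp 1 2 3 5 (by decide) x (hseg 0 hk) (hseg 4 hk')
    · exact TriAux.noCross p hgp 1 2 3 4 (by decide) x (hseg 0 hk) (hseg 5 hk')
    · exact hV1 x hx 1 0 2 2 (by decide) rfl (TriAux.notInSpan p hgp 3 4 5 2 (by decide)) hk hk'
    · exact hkk rfl
    · exact hV1 x hx 1 2 0 0 (by decide) rfl (TriAux.notInSpan p hgp 3 4 5 0 (by decide)) hk hk'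
    · exact TriAux.noCross p hgp 0 2 4 5 (by decide) x (hseg 1 hk) (hseg 3 hk')
    · exact TriAux.noCross p hgp 0 2 3 5 (by decide) x (hseg 1 hk) (hseg 4 hk')
    · exact TriAux.noCross p hgp 0 2 3 4 (by decide) x (hseg 1 hk) (hseg 5 hk')
    · exact hV1 x hx 2 0 1 1 (by decide) rfl (TriAux.notInSpan p hgp 3 4 5 1 (by decide)) hk hk'
    · exact hV1 x hx 2 1 0 0 (by decide) rfl (TriAux.notInSpan p hgp 3 4 5 0 (by decide)) hk hk'
    · exact hkk rfl
    · exact TriAux.noCross p hgp 0 1 4 5 (by decide) x (hseg 2 hk) (hseg 3 hk')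
    · exact TriAux.noCross p hgp 0 1 3 5 (by decide) x (hseg 2 hk) (hseg 4 hk')
    · exact TriAux.noCross p hgp 0 1 3 4 (by decide) x (hseg 2 hk) (hseg 5 hk')
    · exact TriAux.noCross p hgp 4 5 1 2 (by decide) x (hseg 3 hk) (hseg 0 hk')
    · exact TriAux.noCross p hgp 4 5 0 2 (by decide) x (hseg 3 hk) (hseg 1 hk')
    · exact TriAux.noCross p hgp 4 5 0 1 (by decide) x (hseg 3 hk) (hseg 2 hk')
    · exact hkk rfl
    · exact hV2 x hx 0 1 2 5 (by decide) rfl (TriAux.notInSpan p hgp 0 1 2 5 (by decide)) hk hk'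
    · exact hV2 x hx 0 2 1 4 (by decide) rfl (TriAux.notInSpan p hgp 0 1 2 4 (by decide)) hk hk'
    · exact TriAux.noCross p hgp 3 5 1 2 (by decide) x (hseg 4 hk) (hseg 0 hk')
    · exact TriAux.noCross p hgp 3 5 0 2 (by decide) x (hseg 4 hk) (hseg 1 hk')
    · exact TriAux.noCross p hgp 3 5 0 1 (by decide) x (hseg 4 hk) (hseg 2 hk')
    · exact hV2 x hx 1 0 2 5 (by decide) rfl (TriAux.notInSpan p hgp 0 1 2 5 (by decide)) hk hk'
    · exact hkk rfl
    · exact hV2 x hx 1 2 0 3 (by decide) rfl (TriAux.notInSpan p hgp 0 1 2 3 (by decide)) hk hk'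
    · exact TriAux.noCross p hgp 3 4 1 2 (by decide) x (hseg 5 hk) (hseg 0 hk')
    · exact TriAux.noCross p hgp 3 4 0 2 (by decide) x (hseg 5 hk) (hseg 1 hk')
    · exact TriAux.noCross p hgp 3 4 0 1 (by decide) x (hseg 5 hk) (hseg 2 hk')
    · exact hV2 x hx 2 0 1 4 (by decide) rfl (TriAux.notInSpan p hgp 0 1 2 4 (by decide)) hk hk'
    · exact hV2 x hx 2 1 0 3 (by decide) rfl (TriAux.notInSpan p hgp 0 1 2 3 (by decide)) hk hk'
    · exact hkk rfl
  -- the intersection line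
  have hx2span : ∀ x ∈ S, x ∈ affineSpan ℝ ({p 3, p 4, p 5} : Set E3) := by
    intro x hx
    rw [← affineSpan_convexHull]
    exact subset_affineSpan ℝ _ hx.2
  have hx1span : ∀ x ∈ S, x ∈ affineSpan ℝ ({p 0, p 1, p 2} : Set E3) := by
    intro x hx
    rw [← affineSpan_convexHull]
    exact subset_affineSpan ℝ _ hx.1
  set H₁ : AffineSubspace ℝ (EuclideanSpace ℝ (Fin 3)) :=
    affineSpan ℝ ({p 0, p 1, p 2} : Set E3) with hH₁
  set H₂ : AffineSubspace ℝ (EuclideanSpace ℝ (Fin 3)) :=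
    affineSpan ℝ ({p 3, p 4, p 5} : Set E3) with hH₂
  have hd1 : Module.finrank ℝ H₁.direction = 2 := TriAux.finrank_dir B₁
  have hd2 : Module.finrank ℝ H₂.direction = 2 := TriAux.finrank_dir B₂
  have hsupfin := Submodule.finrank_sup_add_finrank_inf_eq H₁.direction H₂.direction
  have hsup3 : Module.finrank ℝ ↥(H₁.direction ⊔ H₂.direction) ≤ 3 := by
    have h := Submodule.finrank_le (H₁.direction ⊔ H₂.direction)
    rwa [finrank_euclideanSpace_fin] at h
  have hinfge : 1 ≤ Module.finrank ℝ ↥(H₁.direction ⊓ H₂.direction) := by omega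
  have hinfle : Module.finrank ℝ ↥(H₁.direction ⊓ H₂.direction) ≤ 1 := by
    by_contra hlt
    push_neg at hlt
    have e1 : H₁.direction ⊓ H₂.direction = H₁.direction :=
      Submodule.eq_of_le_of_finrank_le inf_le_left (by omega)
    have e2 : H₁.direction ⊓ H₂.direction = H₂.direction :=
      Submodule.eq_of_le_of_finrank_le inf_le_right (by omega)
    have hdir : H₁.direction = H₂.direction := by rw [← e1, e2]
    have heq : H₁ = H₂ := by
      apply AffineSubspace.ext_of_direction_eq hdir
      exact ⟨z, hx1span z hz, hx2span z hz⟩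
    have h3 : p 3 ∈ H₂ := subset_affineSpan ℝ _ (by simp)
    rw [← heq] at h3
    exact TriAux.notInSpan p hgp 0 1 2 3 (by decide) h3
  have hnebot : H₁.direction ⊓ H₂.direction ≠ ⊥ := by
    intro hbot
    rw [hbot] at hinfge
    simp at hinfge
  obtain ⟨w, hwmem, hwne⟩ := (Submodule.ne_bot_iff (H₁.direction ⊓ H₂.direction)).1 hnebot
  set G : ℝ →ᵃ[ℝ] (EuclideanSpace ℝ (Fin 3)) := AffineMap.lineMap z (w +ᵥ z) with hG
  have hGt : ∀ t : ℝ, G t = t • w + z := by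
    intro t
    rw [hG, AffineMap.lineMap_apply]
    simp [vadd_eq_add, vsub_eq_sub]
  have hGinj : Function.Injective G := by
    intro s t h
    rw [hGt, hGt] at h
    have h1 : s • w = t • w := add_right_cancel h
    have h2 : (s - t) • w = 0 := by rw [sub_smul, h1, sub_self]
    rcases smul_eq_zero.1 h2 with h3 | h3
    · exact sub_eq_zero.1 h3
    · exact absurd h3 hwne
  have hz1 : z ∈ H₁ := hx1span z hz
  have hz2 : z ∈ H₂ := hx2span z hz
  have hspanw : (ℝ ∙ w) = H₁.direction ⊓ H₂.direction := by
    apply Submodule.eq_of_le_of_finrank_le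
    · rw [Submodule.span_singleton_le_iff_mem]; exact hwmem
    · rw [finrank_span_singleton hwne]; exact hinfle
  have hline : ∀ x ∈ S, ∃ t : ℝ, G t = x := by
    intro x hx
    have hv : x -ᵥ z ∈ H₁.direction ⊓ H₂.direction :=
      ⟨AffineSubspace.vsub_mem_direction (hx1span x hx) hz1,
       AffineSubspace.vsub_mem_direction (hx2span x hx) hz2⟩
    rw [← hspanw] at hv
    obtain ⟨t, ht⟩ := Submodule.mem_span_singleton.1 hv
    refine ⟨t, ?_⟩
    rw [hGt, ht]
    simp [vsub_eq_sub]
  have hGplane : ∀ t : ℝ, B₁.coord 3 (G t) = 0 ∧ B₂.coord 3 (G t) = 0 := by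
    intro t
    have hw1 : (t • w) ∈ H₁.direction := Submodule.smul_mem _ t hwmem.1
    have hw2 : (t • w) ∈ H₂.direction := Submodule.smul_mem _ t hwmem.2
    constructor
    · apply (hplane1 _).1
      rw [hGt]
      exact AffineSubspace.vadd_mem_of_mem_direction hw1 hz1
    · apply (hplane2 _).1
      rw [hGt]
      exact AffineSubspace.vadd_mem_of_mem_direction hw2 hz2
  have hfin1 : ({p 0, p 1, p 2} : Set E3).Finite :=
    ((Set.finite_singleton _).insert _).insert _
  have hfin2 : ({p 3, p 4, p 5} : Set E3).Finite :=
    ((Set.finite_singleton _).insert _).insert _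
  have hScompact : IsCompact S :=
    (hfin1.isCompact_convexHull ℝ).inter_right (hfin2.isClosed_convexHull ℝ)
  have hSconv : Convex ℝ S := (convex_convexHull ℝ _).inter (convex_convexHull ℝ _)
  set SA : Set ℝ := G ⁻¹' S with hSA
  have hSAconv : Convex ℝ SA := hSconv.affine_preimage G
  set F : EuclideanSpace ℝ (Fin 3) → ℝ := fun x => (inner ℝ (x - z) w : ℝ) / (‖w‖ ^ 2) with hF
  have hFG : ∀ t : ℝ, F (G t) = t := by
    intro t
    rw [hGt, hF]
    simp only [add_sub_cancel_right]
    rw [real_inner_smul_left, real_inner_self_eq_norm_sq]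
    have hw2 : ‖w‖ ^ 2 ≠ 0 := pow_ne_zero _ (norm_ne_zero_iff.2 hwne)
    field_simp
  have hFcont : Continuous F := by
    apply Continuous.div_const
    exact Continuous.inner (continuous_id.sub continuous_const) continuous_const
  have hSAeq : SA = F '' S := by
    apply Set.Subset.antisymm
    · intro t ht
      exact ⟨G t, ht, hFG t⟩
    · rintro r ⟨x, hxS, rfl⟩
      obtain ⟨t, rfl⟩ := hline x hxS
      rw [hFG]
      exact hxS
  have hSAcompact : IsCompact SA := by rw [hSAeq]; exact hScompact.image hFcont
  have hSAne : SA.Nonempty := ⟨0, by show G 0 ∈ S; rw [hGt]; simpa using hz⟩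
  set α := sInf SA with hα
  set β := sSup SA with hβ
  have hIcc : SA = Set.Icc α β :=
    eq_Icc_of_connected_compact ⟨hSAne, hSAconv.isPreconnected⟩ hSAcompact
  have hαβ : α ≤ β := by
    obtain ⟨t, ht⟩ := hSAne
    rw [hIcc] at ht
    exact le_trans ht.1 ht.2
  have hGS : ∀ t : ℝ, G t ∈ S ↔ t ∈ Set.Icc α β := by
    intro t
    rw [← hIcc]
    exact Iff.rfl
  have hSseg : S = segment ℝ (G α) (G β) := by
    have hSim : S = G '' SA := by
      apply Set.Subset.antisymm
      · intro x hx
        obtain ⟨t, ht⟩ := hline x hx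
        exact ⟨t, by show G t ∈ S; rw [ht]; exact hx, ht⟩
      · rintro x ⟨t, htS, rfl⟩
        exact htS
    rw [hSim, hIcc, ← segment_eq_Icc hαβ, image_segment]
  have huS : G α ∈ S := (hGS α).2 ⟨le_refl α, hαβ⟩
  have hvS : G β ∈ S := (hGS β).2 ⟨hαβ, le_refl β⟩
  have hcont6 : ∀ k : Fin 6, Continuous fun t : ℝ => φ k (G t) :=
    fun k => ((φ k).continuous_of_finiteDimensional).comp G.continuous_of_finiteDimensional
  have hEndGen : ∀ (γ : ℝ) (Io : Set ℝ), G γ ∈ S → (nhdsWithin γ Io).NeBot →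
      (∀ t ∈ Io, t ∉ Set.Icc α β) → ∃ k, φ k (G γ) = 0 := by
    intro γ Io hγS hnb hbad
    by_contra hno
    push_neg at hno
    have hpos : ∀ k, 0 < φ k (G γ) := fun k =>
      lt_of_le_of_ne (((hSmem _).1 hγS).1 k) (Ne.symm (hno k))
    have hUopen : IsOpen {t : ℝ | ∀ k, 0 < φ k (G t)} := by
      have he : {t : ℝ | ∀ k, 0 < φ k (G t)} = ⋂ k, {t | 0 < φ k (G t)} := by ext t; simp
      rw [he]
      exact isOpen_iInter_of_finite fun k => isOpen_lt continuous_const (hcont6 k)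
    have hmem0 : {t : ℝ | ∀ k, 0 < φ k (G t)} ∈ nhds γ := hUopen.mem_nhds hpos
    have hev : ∀ᶠ t in nhdsWithin γ Io, ∀ k, 0 < φ k (G t) :=
      mem_nhdsWithin_of_mem_nhds hmem0
    obtain ⟨t, htp, htIo⟩ := (hev.and self_mem_nhdsWithin).exists
    have htS : G t ∈ S := (hSmem _).2 ⟨fun k => (htp k).le, (hGplane t).1, (hGplane t).2⟩
    exact hbad t htIo ((hGS t).1 htS)
  have hEndα : ∃ k, φ k (G α) = 0 := by
    refine hEndGen α (Set.Iio α) huS ?_ ?_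
    · exact nhdsLT_neBot α
    · intro t ht hmem
      exact absurd hmem.1 (not_le.2 ht)
  have hEndβ : ∃ k, φ k (G β) = 0 := by
    refine hEndGen β (Set.Ioi β) hvS ?_ ?_
    · exact nhdsGT_neBot β
    · intro t ht hmem
      exact absurd hmem.2 (not_le.2 ht)
  have heval : ∀ (ψ : (EuclideanSpace ℝ (Fin 3)) →ᵃ[ℝ] ℝ) (y vv : EuclideanSpace ℝ (Fin 3)),
      ψ (vv + y) = ψ.linear vv + ψ y := by
    intro ψ y vv
    have h := ψ.map_vadd y vv
    simpa [vadd_eq_add] using h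
  have hcore : ∀ x ∈ S, ∀ w' : EuclideanSpace ℝ (Fin 3),
      w' ∈ H₁.direction ⊓ H₂.direction → w' ≠ 0 →
      ∀ k₀ : Fin 6, 0 ≤ (φ k₀).linear w' → (∀ k, k ≠ k₀ → 0 < φ k x) →
      ∃ t : ℝ, 0 < t ∧ t • w' + x ∈ S := by
    intro x hx w' hw'mem hw'ne k₀ hlin hpos
    have hUopen : IsOpen {t : ℝ | ∀ k, k ≠ k₀ → 0 < φ k (t • w' + x)} := by
      have he : {t : ℝ | ∀ k, k ≠ k₀ → 0 < φ k (t • w' + x)} =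
          ⋂ k, {t | k ≠ k₀ → 0 < φ k (t • w' + x)} := by ext t; simp
      rw [he]
      refine isOpen_iInter_of_finite fun k => ?_
      by_cases hk : k = k₀
      · subst hk
        have he2 : {t : ℝ | k ≠ k → 0 < φ k (t • w' + x)} = Set.univ := by
          ext t; simp
        rw [he2]
        exact isOpen_univ
      · have hc : Continuous fun t : ℝ => φ k (t • w' + x) :=
          (φ k).continuous_of_finiteDimensional.comp
            ((continuous_id.smul continuous_const).add continuous_const)
        have he2 : {t : ℝ | k ≠ k₀ → 0 < φ k (t • w' + x)} = {t | 0 < φ k (t • w' + x)} := by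
          ext t; simp [hk]
        rw [he2]
        exact isOpen_lt continuous_const hc
    have hmem0 : {t : ℝ | ∀ k, k ≠ k₀ → 0 < φ k (t • w' + x)} ∈ nhds (0 : ℝ) := by
      apply hUopen.mem_nhds
      intro k hk
      simpa using hpos k hk
    have hev : ∀ᶠ t in nhdsWithin (0 : ℝ) (Set.Ioi 0), ∀ k, k ≠ k₀ → 0 < φ k (t • w' + x) :=
      mem_nhdsWithin_of_mem_nhds hmem0
    obtain ⟨t, htp, htIo⟩ := (hev.and self_mem_nhdsWithin).exists
    have ht0 : (0 : ℝ) < t := htIo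
    refine ⟨t, ht0, (hSmem _).2 ⟨?_, ?_, ?_⟩⟩
    · intro k
      by_cases hk : k = k₀
      · subst hk
        rw [heval]
        have h1 : 0 ≤ (φ k).linear (t • w') := by
          rw [map_smul, smul_eq_mul]
          exact mul_nonneg ht0.le hlin
        have h2 : 0 ≤ φ k x := ((hSmem x).1 hx).1 k
        linarith
      · exact (htp k hk).le
    · rw [heval]
      have hl : (B₁.coord 3).linear (t • w') = 0 := by
        rw [map_smul, TriAux.coordL3_dir B₁ w' hw'mem.1, smul_zero]
      rw [hl, ((hSmem x).1 hx).2.1, add_zero]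
    · rw [heval]
      have hl : (B₂.coord 3).linear (t • w') = 0 := by
        rw [map_smul, TriAux.coordL3_dir B₂ w' hw'mem.2, smul_zero]
      rw [hl, ((hSmem x).1 hx).2.2, add_zero]
  have hpush : ∀ x ∈ S, ∃ y ∈ S, y ≠ x := by
    intro x hx
    have hget : ∀ w' : EuclideanSpace ℝ (Fin 3), w' ∈ H₁.direction ⊓ H₂.direction → w' ≠ 0 →
        ∀ k₀ : Fin 6, 0 ≤ (φ k₀).linear w' → (∀ k, k ≠ k₀ → 0 < φ k x) →
        ∃ y ∈ S, y ≠ x := by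
      intro w' hm hn k₀ hl hp
      obtain ⟨t, ht0, htS⟩ := hcore x hx w' hm hn k₀ hl hp
      refine ⟨t • w' + x, htS, ?_⟩
      intro hcontra
      have hz0 : t • w' = 0 := by
        have h := congrArg (fun y => y - x) hcontra
        simpa using h
      rcases smul_eq_zero.1 hz0 with h | h
      · linarith
      · exact hn h
    rcases em (∃ k, φ k x = 0) with ⟨k₀, hk₀⟩ | hno
    · have hp : ∀ k, k ≠ k₀ → 0 < φ k x := fun k hk =>
        lt_of_le_of_ne (((hSmem x).1 hx).1 k) (fun h => hAMO x hx k k₀ hk h.symm hk₀)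
      rcases le_or_gt 0 ((φ k₀).linear w) with hsgn | hsgn
      · exact hget w hwmem hwne k₀ hsgn hp
      · refine hget (-w) (Submodule.neg_mem _ hwmem) (neg_ne_zero.2 hwne) k₀ ?_ hp
        rw [map_neg]; linarith
    · push_neg at hno
      have hp : ∀ k, k ≠ (0 : Fin 6) → 0 < φ k x := fun k _ =>
        lt_of_le_of_ne (((hSmem x).1 hx).1 k) (Ne.symm (hno k))
      rcases le_or_gt 0 ((φ 0).linear w) with hsgn | hsgn
      · exact hget w hwmem hwne 0 hsgn hp
      · refine hget (-w) (Submodule.neg_mem _ hwmem) (neg_ne_zero.2 hwne) 0 ?_ hp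
        rw [map_neg]; linarith
  have hαβne : α ≠ β := by
    intro hEq
    obtain ⟨y, hyS, hyne⟩ := hpush (G α) huS
    rw [hSseg, ← hEq, segment_same] at hyS
    exact hyne hyS
  have huv : G α ≠ G β := fun h => hαβne (hGinj h)
  refine ⟨⟨G α, G β, huv, hSseg⟩, ?_⟩
  obtain ⟨ku, hku⟩ := hEndα
  obtain ⟨kv, hkv⟩ := hEndβ
  have huniqu : ∀ k : Fin 6, φ k (G α) = 0 → k = ku := fun k h =>
    by_contra fun hne => hAMO _ huS k ku hne h hku
  have huniqv : ∀ k : Fin 6, φ k (G β) = 0 → k = kv := fun k h =>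
    by_contra fun hne => hAMO _ hvS k kv hne h hkv
  have hsame : ∀ k : Fin 6, φ k (G α) = 0 → φ k (G β) = 0 → False := by
    intro k hk hk'
    fin_cases k
    · have h := TriAux.endpoints_mem H₂ (p 1) (p 2) (G α) (G β) huv
        (hA _ huS 0 hk) (hA _ hvS 0 hk') (hx2span _ huS) (hx2span _ hvS)
      exact TriAux.notInSpan p hgp 3 4 5 1 (by decide) h.1
    · have h := TriAux.endpoints_mem H₂ (p 0) (p 2) (G α) (G β) huv
        (hA _ huS 1 hk) (hA _ hvS 1 hk') (hx2span _ huS) (hx2span _ hvS)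
      exact TriAux.notInSpan p hgp 3 4 5 0 (by decide) h.1
    · have h := TriAux.endpoints_mem H₂ (p 0) (p 1) (G α) (G β) huv
        (hA _ huS 2 hk) (hA _ hvS 2 hk') (hx2span _ huS) (hx2span _ hvS)
      exact TriAux.notInSpan p hgp 3 4 5 0 (by decide) h.1
    · have h := TriAux.endpoints_mem H₁ (p 4) (p 5) (G α) (G β) huv
        (hA _ huS 3 hk) (hA _ hvS 3 hk') (hx1span _ huS) (hx1span _ hvS)
      exact TriAux.notInSpan p hgp 0 1 2 4 (by decide) h.1
    · have h := TriAux.endpoints_mem H₁ (p 3) (p 5) (G α) (G β) huv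
        (hA _ huS 4 hk) (hA _ hvS 4 hk') (hx1span _ huS) (hx1span _ hvS)
      exact TriAux.notInSpan p hgp 0 1 2 3 (by decide) h.1
    · have h := TriAux.endpoints_mem H₁ (p 3) (p 4) (G α) (G β) huv
        (hA _ huS 5 hk) (hA _ hvS 5 hk') (hx1span _ huS) (hx1span _ hvS)
      exact TriAux.notInSpan p hgp 0 1 2 3 (by decide) h.1
  have hkunekv : ku ≠ kv := fun h => hsame ku hku (h ▸ hkv)
  have hposu : ∀ k : Fin 6, k ≠ ku → 0 < φ k (G α) := fun k hk =>
    lt_of_le_of_ne (((hSmem _).1 huS).1 k) (fun h => hk (huniqu k h.symm))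
  have hposv : ∀ k : Fin 6, k ≠ kv → 0 < φ k (G β) := fun k hk =>
    lt_of_le_of_ne (((hSmem _).1 hvS).1 k) (fun h => hk (huniqv k h.symm))
  have hwitness : ∀ x ∈ S, ∀ k : Fin 6, φ k x = 0 → x = G α ∨ x = G β := by
    intro x hx k hk
    obtain ⟨t, rfl⟩ := hline x hx
    have htI : t ∈ Set.Icc α β := (hGS t).1 hx
    rcases eq_or_lt_of_le htI.1 with h | hlt
    · exact Or.inl (congrArg G h).symm
    rcases eq_or_lt_of_le htI.2 with h | hlt2
    · exact Or.inr (congrArg G h)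
    exfalso
    set ψ : ℝ →ᵃ[ℝ] ℝ := (φ k).comp G with hψ
    have hψt : ψ t = 0 := hk
    have happ : ∀ s : ℝ, ψ s = (s - t) * ψ.linear 1 := by
      intro s
      rw [TriAux.affine_line_eval ψ s t, hψt, add_zero]
    have hψα : 0 ≤ ψ α := ((hSmem _).1 huS).1 k
    have hψβ : 0 ≤ ψ β := ((hSmem _).1 hvS).1 k
    have hμ : ψ.linear 1 = 0 := by
      rcases lt_trichotomy (ψ.linear 1) 0 with h | h | h
      · nlinarith [happ β]
      · exact h
      · nlinarith [happ α]
    have hα0 : φ k (G α) = 0 := by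
      have := happ α
      rw [hμ, mul_zero] at this
      exact this
    have hβ0 : φ k (G β) = 0 := by
      have := happ β
      rw [hμ, mul_zero] at this
      exact this
    exact hsame k hα0 hβ0
  have hbuild : ∀ x ∈ S, ∀ k : Fin 6, φ k x = 0 → (∀ k' : Fin 6, k' ≠ k → 0 < φ k' x) →
      (openSegment ℝ (triEdges p (eMap k)).1 (triEdges p (eMap k)).2 ∩
        intrinsicInterior ℝ (if ((eMap k : Fin 6) : ℕ) < 3 then hull2 else hull1)).Nonempty := by
    intro x hx k hk hpos
    have hc3 : B₁.coord 3 x = 0 := ((hSmem x).1 hx).2.1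
    have hd3 : B₂.coord 3 x = 0 := ((hSmem x).1 hx).2.2
    fin_cases k
    · refine ⟨x, show x ∈ openSegment ℝ (p 1) (p 2) from
        (TriAux.openSeg_iff B₁ 1 2 (by decide) x).2
          ⟨hpos 1 (by decide), hpos 2 (by decide), ?_⟩,
        show x ∈ intrinsicInterior ℝ hull2 from (hrelint2 x).2
          ⟨hpos 3 (by decide), hpos 4 (by decide), hpos 5 (by decide), hd3⟩⟩
      intro m h1 h2
      fin_cases m
      · exact hk
      · exact absurd rfl h1
      · exact absurd rfl h2
      · exact hc3
    · refine ⟨x, show x ∈ openSegment ℝ (p 0) (p 2) from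
        (TriAux.openSeg_iff B₁ 0 2 (by decide) x).2
          ⟨hpos 0 (by decide), hpos 2 (by decide), ?_⟩,
        show x ∈ intrinsicInterior ℝ hull2 from (hrelint2 x).2
          ⟨hpos 3 (by decide), hpos 4 (by decide), hpos 5 (by decide), hd3⟩⟩
      intro m h1 h2
      fin_cases m
      · exact absurd rfl h1
      · exact hk
      · exact absurd rfl h2
      · exact hc3
    · refine ⟨x, show x ∈ openSegment ℝ (p 0) (p 1) from
        (TriAux.openSeg_iff B₁ 0 1 (by decide) x).2
          ⟨hpos 0 (by decide), hpos 1 (by decide), ?_⟩,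
        show x ∈ intrinsicInterior ℝ hull2 from (hrelint2 x).2
          ⟨hpos 3 (by decide), hpos 4 (by decide), hpos 5 (by decide), hd3⟩⟩
      intro m h1 h2
      fin_cases m
      · exact absurd rfl h1
      · exact absurd rfl h2
      · exact hk
      · exact hc3
    · refine ⟨x, show x ∈ openSegment ℝ (p 4) (p 5) from
        (TriAux.openSeg_iff B₂ 1 2 (by decide) x).2
          ⟨hpos 4 (by decide), hpos 5 (by decide), ?_⟩,
        show x ∈ intrinsicInterior ℝ hull1 from (hrelint1 x).2
          ⟨hpos 0 (by decide), hpos 1 (by decide), hpos 2 (by decide), hc3⟩⟩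
      intro m h1 h2
      fin_cases m
      · exact hk
      · exact absurd rfl h1
      · exact absurd rfl h2
      · exact hd3
    · refine ⟨x, show x ∈ openSegment ℝ (p 3) (p 5) from
        (TriAux.openSeg_iff B₂ 0 2 (by decide) x).2
          ⟨hpos 3 (by decide), hpos 5 (by decide), ?_⟩,
        show x ∈ intrinsicInterior ℝ hull1 from (hrelint1 x).2
          ⟨hpos 0 (by decide), hpos 1 (by decide), hpos 2 (by decide), hc3⟩⟩
      intro m h1 h2
      fin_cases m
      · exact absurd rfl h1
      · exact hk
      · exact absurd rfl h2
      · exact hd3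
    · refine ⟨x, show x ∈ openSegment ℝ (p 3) (p 4) from
        (TriAux.openSeg_iff B₂ 0 1 (by decide) x).2
          ⟨hpos 3 (by decide), hpos 4 (by decide), ?_⟩,
        show x ∈ intrinsicInterior ℝ hull1 from (hrelint1 x).2
          ⟨hpos 0 (by decide), hpos 1 (by decide), hpos 2 (by decide), hc3⟩⟩
      intro m h1 h2
      fin_cases m
      · exact absurd rfl h1
      · exact absurd rfl h2
      · exact hk
      · exact hd3
  have key : ∀ m : Fin 6,
      (openSegment ℝ (triEdges p m).1 (triEdges p m).2 ∩
        intrinsicInterior ℝ (if (m : ℕ) < 3 then hull2 else hull1)).Nonempty ↔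
      (m = eMap ku ∨ m = eMap kv) := by
    intro m
    constructor
    · rintro ⟨x, hxseg, hxint⟩
      fin_cases m
      · have hseg' : x ∈ openSegment ℝ (p 0) (p 1) := hxseg
        obtain ⟨hc0, hc1, hvan⟩ := (TriAux.openSeg_iff B₁ 0 1 (by decide) x).1 hseg'
        have hc2 : B₁.coord 2 x = 0 := hvan 2 (by decide) (by decide)
        have hc3 : B₁.coord 3 x = 0 := hvan 3 (by decide) (by decide)
        have hint' : x ∈ intrinsicInterior ℝ hull2 := hxint
        obtain ⟨hd0, hd1, hd2, hd3⟩ := (hrelint2 x).1 hint'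
        have hxS : x ∈ S := (hSmem x).2 ⟨by
          intro k
          fin_cases k
          exacts [hc0.le, hc1.le, le_of_eq hc2.symm, hd0.le, hd1.le, hd2.le], hc3, hd3⟩
        rcases hwitness x hxS 2 hc2 with rfl | rfl
        · left; rw [← huniqu 2 hc2, hE]; decide
        · right; rw [← huniqv 2 hc2, hE]; decide
      · have hseg' : x ∈ openSegment ℝ (p 1) (p 2) := hxseg
        obtain ⟨hc1, hc2, hvan⟩ := (TriAux.openSeg_iff B₁ 1 2 (by decide) x).1 hseg'
        have hc0 : B₁.coord 0 x = 0 := hvan 0 (by decide) (by decide)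
        have hc3 : B₁.coord 3 x = 0 := hvan 3 (by decide) (by decide)
        have hint' : x ∈ intrinsicInterior ℝ hull2 := hxint
        obtain ⟨hd0, hd1, hd2, hd3⟩ := (hrelint2 x).1 hint'
        have hxS : x ∈ S := (hSmem x).2 ⟨by
          intro k
          fin_cases k
          exacts [le_of_eq hc0.symm, hc1.le, hc2.le, hd0.le, hd1.le, hd2.le], hc3, hd3⟩
        rcases hwitness x hxS 0 hc0 with rfl | rfl
        · left; rw [← huniqu 0 hc0, hE]; decide
        · right; rw [← huniqv 0 hc0, hE]; decide
      · have hseg' : x ∈ openSegment ℝ (p 0) (p 2) := hxseg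
        obtain ⟨hc0, hc2, hvan⟩ := (TriAux.openSeg_iff B₁ 0 2 (by decide) x).1 hseg'
        have hc1 : B₁.coord 1 x = 0 := hvan 1 (by decide) (by decide)
        have hc3 : B₁.coord 3 x = 0 := hvan 3 (by decide) (by decide)
        have hint' : x ∈ intrinsicInterior ℝ hull2 := hxint
        obtain ⟨hd0, hd1, hd2, hd3⟩ := (hrelint2 x).1 hint'
        have hxS : x ∈ S := (hSmem x).2 ⟨by
          intro k
          fin_cases k
          exacts [hc0.le, le_of_eq hc1.symm, hc2.le, hd0.le, hd1.le, hd2.le], hc3, hd3⟩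
        rcases hwitness x hxS 1 hc1 with rfl | rfl
        · left; rw [← huniqu 1 hc1, hE]; decide
        · right; rw [← huniqv 1 hc1, hE]; decide
      · have hseg' : x ∈ openSegment ℝ (p 3) (p 4) := hxseg
        obtain ⟨hd0, hd1, hvan⟩ := (TriAux.openSeg_iff B₂ 0 1 (by decide) x).1 hseg'
        have hd2 : B₂.coord 2 x = 0 := hvan 2 (by decide) (by decide)
        have hd3 : B₂.coord 3 x = 0 := hvan 3 (by decide) (by decide)
        have hint' : x ∈ intrinsicInterior ℝ hull1 := hxint
        obtain ⟨hc0, hc1, hc2, hc3⟩ := (hrelint1 x).1 hint'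
        have hxS : x ∈ S := (hSmem x).2 ⟨by
          intro k
          fin_cases k
          exacts [hc0.le, hc1.le, hc2.le, hd0.le, hd1.le, le_of_eq hd2.symm], hc3, hd3⟩
        rcases hwitness x hxS 5 hd2 with rfl | rfl
        · left; rw [← huniqu 5 hd2, hE]; decide
        · right; rw [← huniqv 5 hd2, hE]; decide
      · have hseg' : x ∈ openSegment ℝ (p 4) (p 5) := hxseg
        obtain ⟨hd1, hd2, hvan⟩ := (TriAux.openSeg_iff B₂ 1 2 (by decide) x).1 hseg'
        have hd0 : B₂.coord 0 x = 0 := hvan 0 (by decide) (by decide)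
        have hd3 : B₂.coord 3 x = 0 := hvan 3 (by decide) (by decide)
        have hint' : x ∈ intrinsicInterior ℝ hull1 := hxint
        obtain ⟨hc0, hc1, hc2, hc3⟩ := (hrelint1 x).1 hint'
        have hxS : x ∈ S := (hSmem x).2 ⟨by
          intro k
          fin_cases k
          exacts [hc0.le, hc1.le, hc2.le, le_of_eq hd0.symm, hd1.le, hd2.le], hc3, hd3⟩
        rcases hwitness x hxS 3 hd0 with rfl | rfl
        · left; rw [← huniqu 3 hd0, hE]; decide
        · right; rw [← huniqv 3 hd0, hE]; decide
      · have hseg' : x ∈ openSegment ℝ (p 3) (p 5) := hxseg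
        obtain ⟨hd0, hd2, hvan⟩ := (TriAux.openSeg_iff B₂ 0 2 (by decide) x).1 hseg'
        have hd1 : B₂.coord 1 x = 0 := hvan 1 (by decide) (by decide)
        have hd3 : B₂.coord 3 x = 0 := hvan 3 (by decide) (by decide)
        have hint' : x ∈ intrinsicInterior ℝ hull1 := hxint
        obtain ⟨hc0, hc1, hc2, hc3⟩ := (hrelint1 x).1 hint'
        have hxS : x ∈ S := (hSmem x).2 ⟨by
          intro k
          fin_cases k
          exacts [hc0.le, hc1.le, hc2.le, hd0.le, le_of_eq hd1.symm, hd2.le], hc3, hd3⟩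
        rcases hwitness x hxS 4 hd1 with rfl | rfl
        · left; rw [← huniqu 4 hd1, hE]; decide
        · right; rw [← huniqv 4 hd1, hE]; decide
    · rintro (rfl | rfl)
      · exact hbuild (G α) huS ku hku hposu
      · exact hbuild (G β) hvS kv hkv hposv
  have hEne : eMap ku ≠ eMap kv := by
    intro h
    apply hkunekv
    have hinj : Function.Injective (![1, 2, 0, 4, 5, 3] : Fin 6 → Fin 6) := by decide
    rw [hE] at h
    exact hinj h
  rw [Nat.card_congr (Equiv.subtypeEquivRight key)]
  calc Nat.card {i : Fin 6 // i = eMap ku ∨ i = eMap kv}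
      = Nat.card ↥({eMap ku, eMap kv} : Set (Fin 6)) := rfl
    _ = ({eMap ku, eMap kv} : Set (Fin 6)).ncard := Nat.card_coe_set_eq _
    _ = 2 := Set.ncard_pair hEne
end
end

section
/- Let abc and def be two vertex-disjoint triangles of a triangulation Δ of a closed surface, and suppose a simplexwise linear immersion of Δ into ℝ³ maps them (with vertices in general position) to triangles intersecting in a nondegenerate segment. Then if an edge e of abc pierces the triangle def, the triangle of Δ adjacent to abc along e does not have all three of its vertices in {a,b,c,d,e,f}. Consequently, at most 4 of the 6 triangles of Δ adjacent to abc or def have all three vertices in {a,b,c,d,e,f}. -/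
noncomputable section

open scoped Classical

local notation "E3" => EuclideanSpace ℝ (Fin 3)

lemma combo_mem_convexHull (p q r : E3) {α β γ : ℝ} (hα : 0 ≤ α) (hβ : 0 ≤ β) (hγ : 0 ≤ γ)
    (hsum : α + β + γ = 1) : α • p + β • q + γ • r ∈ convexHull ℝ ({p, q, r} : Set E3) := by
  have h := Finset.centerMass_mem_convexHull (t := (Finset.univ : Finset (Fin 3)))
    (w := ![α, β, γ]) (z := ![p, q, r]) (s := ({p, q, r} : Set E3)) (hws := ?_) ?_ (hz := ?_)
  · rwa [Finset.centerMass, show ∑ i, ![α, β, γ] i = 1 by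
        simp [Fin.sum_univ_three, hsum], inv_one, one_smul, Fin.sum_univ_three] at h
  · intro i _; fin_cases i <;> simpa
  · simp [Fin.sum_univ_three, hsum]
  · intro i _; fin_cases i <;> simp

lemma exists_coords_of_mem_convexHull {p q r x : E3}
    (hx : x ∈ convexHull ℝ ({p, q, r} : Set E3)) :
    ∃ α β γ : ℝ, 0 ≤ α ∧ 0 ≤ β ∧ 0 ≤ γ ∧ α + β + γ = 1 ∧ x = α • p + β • q + γ • r := by
  rw [convexHull_insert ⟨q, by simp⟩, mem_convexJoin] at hx
  obtain ⟨a, ha, z, hz, hxz⟩ := hx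
  rw [Set.mem_singleton_iff] at ha
  subst ha
  rw [convexHull_pair] at hz
  obtain ⟨s₁, s₂, hs₁, hs₂, hs, rfl⟩ := hz
  obtain ⟨t₁, t₂, ht₁, ht₂, ht, rfl⟩ := hxz
  refine ⟨t₁, t₂ * s₁, t₂ * s₂, ht₁, by positivity, by positivity, by nlinarith, ?_⟩
  module

lemma edge_or_extend {p q r x y : E3}
    (hx : x ∈ convexHull ℝ ({p, q, r} : Set E3))
    (hy : y ∈ convexHull ℝ ({p, q, r} : Set E3)) :
    (x ∈ segment ℝ p q ∨ x ∈ segment ℝ q r ∨ x ∈ segment ℝ p r) ∨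
    ∃ ε₀ > (0:ℝ), ∀ ε : ℝ, 0 < ε → ε ≤ ε₀ →
      (1 + ε) • x - ε • y ∈ convexHull ℝ ({p, q, r} : Set E3) := by
  obtain ⟨α, β, γ, hα, hβ, hγ, hsum, hxe⟩ := exists_coords_of_mem_convexHull hx
  obtain ⟨α', β', γ', hα', hβ', hγ', hsum', hye⟩ := exists_coords_of_mem_convexHull hy
  rcases eq_or_lt_of_le hα with h0 | hαpos
  · exact Or.inl (Or.inr (Or.inl ⟨β, γ, hβ, hγ, by linarith,
      by rw [hxe, ← h0, zero_smul, zero_add]⟩))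
  rcases eq_or_lt_of_le hβ with h0 | hβpos
  · exact Or.inl (Or.inr (Or.inr ⟨α, γ, hα, hγ, by linarith,
      by rw [hxe, ← h0, zero_smul, add_zero]⟩))
  rcases eq_or_lt_of_le hγ with h0 | hγpos
  · exact Or.inl (Or.inl ⟨α, β, hα, hβ, by linarith,
      by rw [hxe, ← h0, zero_smul, add_zero]⟩)
  refine Or.inr ⟨min α (min β γ), by positivity, fun ε hε hεle => ?_⟩
  have hεα : ε ≤ α := le_trans hεle (min_le_left _ _)
  have hεβ : ε ≤ β := le_trans hεle (le_trans (min_le_right _ _) (min_le_left _ _))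
  have hεγ : ε ≤ γ := le_trans hεle (le_trans (min_le_right _ _) (min_le_right _ _))
  have h := combo_mem_convexHull p q r
    (α := (1 + ε) * α - ε * α') (β := (1 + ε) * β - ε * β') (γ := (1 + ε) * γ - ε * γ')
    (by nlinarith) (by nlinarith) (by nlinarith)
    (by linear_combination (1+ε)*hsum - ε*hsum')
  convert h using 1
  rw [hxe, hye]
  module

lemma endpoint_cases {p q r p' q' r' x y : E3} (hxy : x ≠ y)
    (hseg : convexHull ℝ ({p, q, r} : Set E3) ∩ convexHull ℝ ({p', q', r'} : Set E3)
      = segment ℝ x y) :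
    (x ∈ segment ℝ p q ∨ x ∈ segment ℝ q r ∨ x ∈ segment ℝ p r) ∨
    (x ∈ segment ℝ p' q' ∨ x ∈ segment ℝ q' r' ∨ x ∈ segment ℝ p' r') := by
  have hxm : x ∈ convexHull ℝ ({p, q, r} : Set E3) ∩ convexHull ℝ ({p', q', r'} : Set E3) := by
    rw [hseg]; exact left_mem_segment ℝ x y
  have hym : y ∈ convexHull ℝ ({p, q, r} : Set E3) ∩ convexHull ℝ ({p', q', r'} : Set E3) := by
    rw [hseg]; exact right_mem_segment ℝ x y
  rcases edge_or_extend hxm.1 hym.1 with h | ⟨ε₁, hε₁, H1⟩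
  · exact Or.inl h
  rcases edge_or_extend hxm.2 hym.2 with h | ⟨ε₂, hε₂, H2⟩
  · exact Or.inr h
  exfalso
  set ε := min ε₁ ε₂ with hε
  have hεpos : 0 < ε := lt_min hε₁ hε₂
  have hz : (1 + ε) • x - ε • y ∈ segment ℝ x y := by
    rw [← hseg]
    exact ⟨H1 ε hεpos (min_le_left _ _), H2 ε hεpos (min_le_right _ _)⟩
  obtain ⟨a, b, ha, hb, hab, habe⟩ := hz
  have ha' : a = 1 - b := by linarith
  rw [ha'] at habe
  have key : (b + ε) • (y - x) = ((1 - b) • x + b • y) - ((1 + ε) • x - ε • y) := by module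
  rw [habe, sub_self] at key
  rcases smul_eq_zero.mp key with h | h
  · linarith
  · exact hxy (by rwa [sub_eq_zero, eq_comm] at h)

lemma seg_pts_span {p q x y : E3} (hxy : x ≠ y)
    (hx : x ∈ segment ℝ p q) (hy : y ∈ segment ℝ p q) :
    p ∈ affineSpan ℝ ({x, y} : Set E3) ∧ q ∈ affineSpan ℝ ({x, y} : Set E3) := by
  obtain ⟨a₁, b₁, ha₁, hb₁, hab₁, rfl⟩ := hx
  obtain ⟨a₂, b₂, ha₂, hb₂, hab₂, rfl⟩ := hy
  have hb₁' : b₁ = 1 - a₁ := by linarith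
  have hb₂' : b₂ = 1 - a₂ := by linarith
  subst hb₁' hb₂'
  have hne : a₂ - a₁ ≠ 0 := by
    intro h
    apply hxy
    have : a₁ = a₂ := by linarith [sub_eq_zero.mp h]
    rw [this]
  constructor
  · have h := smul_vsub_vadd_mem_affineSpan_pair (k := ℝ)
      ((1 - a₁) / (a₂ - a₁)) (a₁ • p + (1 - a₁) • q) (a₂ • p + (1 - a₂) • q)
    convert h using 2
    rw [vsub_eq_sub, vadd_eq_add]
    match_scalars <;> field_simp <;> ring_nf
  · have h := smul_vsub_vadd_mem_affineSpan_pair (k := ℝ)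
      ((- a₁) / (a₂ - a₁)) (a₁ • p + (1 - a₁) • q) (a₂ • p + (1 - a₂) • q)
    convert h using 2
    rw [vsub_eq_sub, vadd_eq_add]
    match_scalars <;> field_simp <;> ring_nf

lemma not_same_edge {V : Type*} [DecidableEq V] (ψ : V → E3) (A B : Finset V)
    (hd : Disjoint A B) (hcB : B.card = 3)
    (hgp : ∀ s : Finset V, s ⊆ A ∪ B → s.card = 4 → AffineIndependent ℝ (fun v : s => ψ v.1))
    {u v : V} (hu : u ∈ A) {x y : E3} (hxy : x ≠ y)
    (hx : x ∈ segment ℝ (ψ u) (ψ v)) (hy : y ∈ segment ℝ (ψ u) (ψ v))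
    (hxB : x ∈ convexHull ℝ (ψ '' ↑B)) (hyB : y ∈ convexHull ℝ (ψ '' ↑B)) : False := by
  have hspan := (seg_pts_span hxy hx hy).1
  have hsub : ({x, y} : Set E3) ⊆ (affineSpan ℝ (ψ '' ↑B) : Set E3) := by
    rintro z (rfl | rfl)
    · exact convexHull_subset_affineSpan _ hxB
    · exact convexHull_subset_affineSpan _ hyB
  have huB : ψ u ∈ affineSpan ℝ (ψ '' ↑B) := (affineSpan_le.mpr hsub) hspan
  have huNB : u ∉ B := Finset.disjoint_left.mp hd hu
  set s : Finset V := insert u B with hs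
  have hcard : s.card = 4 := by rw [hs, Finset.card_insert_of_notMem huNB, hcB]
  have hsubAB : s ⊆ A ∪ B := by
    rw [hs]
    intro z hz
    rcases Finset.mem_insert.mp hz with rfl | hzB
    · exact Finset.mem_union_left _ hu
    · exact Finset.mem_union_right _ hzB
  have ha := hgp s hsubAB hcard
  have hus : u ∈ s := Finset.mem_insert_self u B
  have hns := ha.notMem_affineSpan_diff ⟨u, hus⟩ {i : s | i.1 ∈ B}
  apply hns
  have himg : (fun i : s => ψ i.1) '' ({i : s | i.1 ∈ B} \ {⟨u, hus⟩}) = ψ '' ↑B := by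
    ext z
    constructor
    · rintro ⟨i, ⟨hiB, _⟩, rfl⟩
      exact ⟨i.1, hiB, rfl⟩
    · rintro ⟨w, hwB, rfl⟩
      refine ⟨⟨w, Finset.mem_insert_of_mem hwB⟩, ⟨hwB, ?_⟩, rfl⟩
      simp only [Set.mem_singleton_iff, Subtype.ext_iff]
      rintro rfl
      exact huNB hwB
  rw [himg]
  exact huB

lemma key_adjacent {V : Type*} [DecidableEq V]
    (triangles : Finset (Finset V))
    (h_tri : ∀ t ∈ triangles, t.card = 3)
    (ψ : V → E3) (t₁ t₂ : Finset V) (h₁ : t₁ ∈ triangles) (h₂ : t₂ ∈ triangles)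
    (h_disj : Disjoint t₁ t₂)
    (h_gp : ∀ s : Finset V, s ⊆ t₁ ∪ t₂ → s.card = 4 →
      AffineIndependent ℝ (fun v : s => ψ v.1))
    (h_imm : ∀ s₁ ∈ triangles, ∀ s₂ ∈ triangles, s₁ ≠ s₂ → ¬ Disjoint s₁ s₂ →
      convexHull ℝ (ψ '' ↑s₁) ∩ convexHull ℝ (ψ '' ↑s₂) ⊆ convexHull ℝ (ψ '' ↑(s₁ ∩ s₂)))
    {u v : V} (hu : u ∈ t₁) (hv : v ∈ t₁) (huv : u ≠ v) {p : E3}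
    (hp1 : p ∈ segment ℝ (ψ u) (ψ v)) (hp2 : p ∈ convexHull ℝ (ψ '' ↑t₂)) :
    ∀ t ∈ triangles, ({u, v} : Finset V) ⊆ t → t ≠ t₁ → ¬ t ⊆ t₁ ∪ t₂ := by
  intro t ht hsub hne hts
  have hcard : t.card = 3 := h_tri t ht
  have hcard₁ : t₁.card = 3 := h_tri t₁ h₁
  have hcard₂ : t₂.card = 3 := h_tri t₂ h₂
  have hcuv : ({u, v} : Finset V).card = 2 := Finset.card_pair huv
  have hsd : (t \ {u, v}).card = 1 := by
    rw [Finset.card_sdiff_of_subset hsub, hcard, hcuv]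
  obtain ⟨w, hw⟩ := Finset.card_eq_one.mp hsd
  have hwmem : w ∈ t \ ({u, v} : Finset V) := hw ▸ Finset.mem_singleton_self w
  have hwt : w ∈ t := (Finset.mem_sdiff.mp hwmem).1
  have hwuv : w ∉ ({u, v} : Finset V) := (Finset.mem_sdiff.mp hwmem).2
  have hwu : w ≠ u := fun h => hwuv (by simp [h])
  have hwv : w ≠ v := fun h => hwuv (by simp [h])
  have hteq : t = {u, v, w} := by
    have h1 : ({u, v} : Finset V) ∪ (t \ {u, v}) = t := Finset.union_sdiff_of_subset hsub
    rw [hw] at h1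
    rw [← h1]
    ext x; simp
  have hunotm : u ∉ t₂ := Finset.disjoint_left.mp h_disj hu
  have hvnotm : v ∉ t₂ := Finset.disjoint_left.mp h_disj hv
  rcases Finset.mem_union.mp (hts hwt) with hwt₁ | hwt₂
  · apply hne
    apply Finset.eq_of_subset_of_card_le
    · rw [hteq]; intro x hx; simp at hx; rcases hx with rfl | rfl | rfl <;> assumption
    · rw [hcard, hcard₁]
  · have hnet₂ : t ≠ t₂ := fun h => hunotm (h ▸ hsub (by simp))
    have hndisj : ¬ Disjoint t t₂ := Finset.not_disjoint_iff.mpr ⟨w, hwt, hwt₂⟩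
    have hint : t ∩ t₂ = {w} := by
      ext x
      simp only [Finset.mem_inter, hteq, Finset.mem_insert, Finset.mem_singleton]
      constructor
      · rintro ⟨rfl | rfl | rfl, hx2⟩
        · exact absurd hx2 hunotm
        · exact absurd hx2 hvnotm
        · rfl
      · rintro rfl; exact ⟨Or.inr (Or.inr rfl), hwt₂⟩
    have hpt : p ∈ convexHull ℝ (ψ '' ↑t) := by
      rw [← convexHull_pair] at hp1
      refine convexHull_mono ?_ hp1
      rintro x (rfl | rfl)
      · exact ⟨u, by simp [hteq], rfl⟩
      · exact ⟨v, by simp [hteq], rfl⟩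
    have hpw : p = ψ w := by
      have := h_imm t ht t₂ h₂ hnet₂ hndisj ⟨hpt, hp2⟩
      rw [hint] at this
      simpa using this
    obtain ⟨z, hzt₂, hzw⟩ := Finset.exists_mem_ne (by omega) w (s := t₂)
    have hzu : z ≠ u := fun h => hunotm (h ▸ hzt₂)
    have hzv : z ≠ v := fun h => hvnotm (h ▸ hzt₂)
    set s : Finset V := {u, v, w, z} with hs
    have hssub : s ⊆ t₁ ∪ t₂ := by
      intro x hx
      simp only [hs, Finset.mem_insert, Finset.mem_singleton] at hx
      rcases hx with rfl | rfl | rfl | rfl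
      · exact Finset.mem_union_left _ hu
      · exact Finset.mem_union_left _ hv
      · exact Finset.mem_union_right _ hwt₂
      · exact Finset.mem_union_right _ hzt₂
    have hscard : s.card = 4 := by
      rw [hs]
      rw [Finset.card_insert_of_notMem (by simp [huv, hwu.symm, hzu.symm]),
        Finset.card_insert_of_notMem (by simp [hwv.symm, hzv.symm]),
        Finset.card_insert_of_notMem (by simp [hzw.symm]), Finset.card_singleton]
    have ha := h_gp s hssub hscard
    have hus : u ∈ s := by simp [hs]
    have hvs : v ∈ s := by simp [hs]
    have hws : w ∈ s := by simp [hs]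
    have hnspan := ha.notMem_affineSpan_diff ⟨w, hws⟩ {⟨u, hus⟩, ⟨v, hvs⟩}
    apply hnspan
    have himg : (fun x : s => ψ x.1) '' (({⟨u, hus⟩, ⟨v, hvs⟩} : Set s) \ {⟨w, hws⟩}) =
        {ψ u, ψ v} := by
      rw [Set.diff_singleton_eq_self (by simp [Subtype.ext_iff]; exact ⟨hwu, hwv⟩),
        Set.image_pair]
    rw [himg]
    have : p ∈ affineSpan ℝ ({ψ u, ψ v} : Set E3) := by
      rw [← convexHull_pair] at hp1
      exact convexHull_subset_affineSpan _ hp1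
    rwa [hpw] at this

/-- Let `t₁ = abc` and `t₂ = def` be two vertex-disjoint triangles of a
triangulation `Δ` of a closed surface (every edge lies in exactly two triangles), and let
`ψ` induce a simplexwise linear immersion of `Δ` into `ℝ³` (two triangles sharing a
vertex intersect only in the image of their common face) mapping `t₁`, `t₂` — with their
six vertex images in general position (any four affinely independent) — to triangles
intersecting in a nondegenerate segment.  Then:
* if an edge `{u,v}` of `t₁` pierces the triangle `t₂` (its open segment meets the
  relative interior of the image of `t₂`), the triangle of `Δ` adjacent to `t₁` along
  this edge does not have all three of its vertices among the six vertices of `t₁ ∪ t₂`;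
* consequently, at most `4` of the `6` triangles of `Δ` adjacent to `t₁` or `t₂` have all
  three of their vertices in `t₁ ∪ t₂`. -/
theorem piercing_edge_adjacent_triangle {V : Type*} [DecidableEq V]
    (triangles : Finset (Finset V))
    (h_tri : ∀ t ∈ triangles, t.card = 3)
    (h_edge_two : ∀ e : Finset V, e.card = 2 → (∃ t ∈ triangles, e ⊆ t) →
      (triangles.filter fun t => e ⊆ t).card = 2)
    (ψ : V → E3)
    (t₁ t₂ : Finset V) (h₁ : t₁ ∈ triangles) (h₂ : t₂ ∈ triangles)
    (h_disj : Disjoint t₁ t₂)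
    (h_gp : ∀ s : Finset V, s ⊆ t₁ ∪ t₂ → s.card = 4 →
      AffineIndependent ℝ (fun v : s => ψ v.1))
    (h_imm : ∀ s₁ ∈ triangles, ∀ s₂ ∈ triangles, s₁ ≠ s₂ → ¬ Disjoint s₁ s₂ →
      convexHull ℝ (ψ '' ↑s₁) ∩ convexHull ℝ (ψ '' ↑s₂) ⊆ convexHull ℝ (ψ '' ↑(s₁ ∩ s₂)))
    (h_seg : ∃ x y : E3, x ≠ y ∧
      convexHull ℝ (ψ '' ↑t₁) ∩ convexHull ℝ (ψ '' ↑t₂) = segment ℝ x y) :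
    (∀ u v : V, u ∈ t₁ → v ∈ t₁ → u ≠ v →
      (openSegment ℝ (ψ u) (ψ v) ∩
        intrinsicInterior ℝ (convexHull ℝ (ψ '' ↑t₂))).Nonempty →
      ∀ t ∈ triangles, ({u, v} : Finset V) ⊆ t → t ≠ t₁ → ¬ t ⊆ t₁ ∪ t₂) ∧
    ((Finset.powersetCard 2 t₁ ∪ Finset.powersetCard 2 t₂).filter
        fun e => ∃ t ∈ triangles, e ⊆ t ∧ t ≠ t₁ ∧ t ≠ t₂ ∧ t ⊆ t₁ ∪ t₂).card ≤ 4 := by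
  have h_gp' : ∀ s : Finset V, s ⊆ t₂ ∪ t₁ → s.card = 4 →
      AffineIndependent ℝ (fun v : s => ψ v.1) := by
    intro s hsub hc
    exact h_gp s (by rwa [Finset.union_comm] at hsub) hc
  constructor
  · intro u v hu hv huv hne t ht hsubt hnet
    obtain ⟨p, hp1, hp2⟩ := hne
    exact key_adjacent triangles h_tri ψ t₁ t₂ h₁ h₂ h_disj h_gp h_imm hu hv huv
      (openSegment_subset_segment ℝ _ _ hp1) (intrinsicInterior_subset hp2) t ht hsubt hnet
  -- part 2
  obtain ⟨x, y, hxy, hseg⟩ := h_seg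
  have hcard₁ : t₁.card = 3 := h_tri t₁ h₁
  have hcard₂ : t₂.card = 3 := h_tri t₂ h₂
  -- bad edges property
  have bad : ∀ u v : V, u ≠ v → ∀ z : E3,
      ((({u, v} : Finset V) ⊆ t₁ ∧ z ∈ segment ℝ (ψ u) (ψ v) ∧ z ∈ convexHull ℝ (ψ '' ↑t₂)) ∨
       (({u, v} : Finset V) ⊆ t₂ ∧ z ∈ segment ℝ (ψ u) (ψ v) ∧ z ∈ convexHull ℝ (ψ '' ↑t₁))) →
      ¬ (∃ t ∈ triangles, ({u, v} : Finset V) ⊆ t ∧ t ≠ t₁ ∧ t ≠ t₂ ∧ t ⊆ t₁ ∪ t₂) := by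
    rintro u v huv z (⟨hsub, hz1, hz2⟩ | ⟨hsub, hz1, hz2⟩) ⟨t, ht, hsubt, hn1, hn2, hts⟩
    · exact key_adjacent triangles h_tri ψ t₁ t₂ h₁ h₂ h_disj h_gp h_imm
        (hsub (by simp)) (hsub (by simp)) huv hz1 hz2 t ht hsubt hn1 hts
    · refine key_adjacent triangles h_tri ψ t₂ t₁ h₂ h₁ h_disj.symm h_gp'
        (fun s₁ hs₁ s₂ hs₂ => h_imm s₁ hs₁ s₂ hs₂)
        (hsub (by simp)) (hsub (by simp)) huv hz1 hz2 t ht hsubt hn2 ?_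
      rwa [Finset.union_comm]
  -- explicit vertices
  obtain ⟨a, b, c, hab, hac, hbc, ht₁e⟩ := Finset.card_eq_three.mp hcard₁
  obtain ⟨d, e, f, hde, hdf, hef, ht₂e⟩ := Finset.card_eq_three.mp hcard₂
  have himg₁ : ψ '' ↑t₁ = ({ψ a, ψ b, ψ c} : Set E3) := by
    rw [ht₁e]; simp [Set.image_insert_eq]
  have himg₂ : ψ '' ↑t₂ = ({ψ d, ψ e, ψ f} : Set E3) := by
    rw [ht₂e]; simp [Set.image_insert_eq]
  have hseg' : convexHull ℝ ({ψ a, ψ b, ψ c} : Set E3) ∩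
      convexHull ℝ ({ψ d, ψ e, ψ f} : Set E3) = segment ℝ x y := by
    rw [← himg₁, ← himg₂]; exact hseg
  have hseg'' : convexHull ℝ ({ψ a, ψ b, ψ c} : Set E3) ∩
      convexHull ℝ ({ψ d, ψ e, ψ f} : Set E3) = segment ℝ y x := by
    rw [hseg', segment_symm]
  -- memberships of endpoints in both hulls
  have hx12 : x ∈ convexHull ℝ (ψ '' ↑t₁) ∩ convexHull ℝ (ψ '' ↑t₂) := by
    rw [hseg]; exact left_mem_segment ℝ x y
  have hy12 : y ∈ convexHull ℝ (ψ '' ↑t₁) ∩ convexHull ℝ (ψ '' ↑t₂) := by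
    rw [hseg]; exact right_mem_segment ℝ x y
  -- package endpoint edges
  have package : ∀ z : E3,
      ((z ∈ segment ℝ (ψ a) (ψ b) ∨ z ∈ segment ℝ (ψ b) (ψ c) ∨ z ∈ segment ℝ (ψ a) (ψ c)) ∨
       (z ∈ segment ℝ (ψ d) (ψ e) ∨ z ∈ segment ℝ (ψ e) (ψ f) ∨ z ∈ segment ℝ (ψ d) (ψ f))) →
      ∃ u v : V, u ≠ v ∧ z ∈ segment ℝ (ψ u) (ψ v) ∧
        ((({u, v} : Finset V) ⊆ t₁) ∨ (({u, v} : Finset V) ⊆ t₂)) := by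
    rintro z ((h | h | h) | (h | h | h))
    · exact ⟨a, b, hab, h, Or.inl (by rw [ht₁e]; intro w hw; simp at hw; rcases hw with rfl | rfl <;> simp)⟩
    · exact ⟨b, c, hbc, h, Or.inl (by rw [ht₁e]; intro w hw; simp at hw; rcases hw with rfl | rfl <;> simp)⟩
    · exact ⟨a, c, hac, h, Or.inl (by rw [ht₁e]; intro w hw; simp at hw; rcases hw with rfl | rfl <;> simp)⟩
    · exact ⟨d, e, hde, h, Or.inr (by rw [ht₂e]; intro w hw; simp at hw; rcases hw with rfl | rfl <;> simp)⟩
    · exact ⟨e, f, hef, h, Or.inr (by rw [ht₂e]; intro w hw; simp at hw; rcases hw with rfl | rfl <;> simp)⟩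
    · exact ⟨d, f, hdf, h, Or.inr (by rw [ht₂e]; intro w hw; simp at hw; rcases hw with rfl | rfl <;> simp)⟩
  obtain ⟨u, v, huv, hxseg, hxside⟩ := package x (endpoint_cases hxy hseg')
  obtain ⟨u', v', huv', hyseg, hyside⟩ := package y (endpoint_cases hxy.symm hseg'')
  -- the two edges
  set Ex : Finset V := {u, v} with hEx
  set Ey : Finset V := {u', v'} with hEy
  have hbadx : ¬ (∃ t ∈ triangles, Ex ⊆ t ∧ t ≠ t₁ ∧ t ≠ t₂ ∧ t ⊆ t₁ ∪ t₂) := by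
    apply bad u v huv x
    rcases hxside with h | h
    · exact Or.inl ⟨h, hxseg, hx12.2⟩
    · exact Or.inr ⟨h, hxseg, hx12.1⟩
  have hbady : ¬ (∃ t ∈ triangles, Ey ⊆ t ∧ t ≠ t₁ ∧ t ≠ t₂ ∧ t ⊆ t₁ ∪ t₂) := by
    apply bad u' v' huv' y
    rcases hyside with h | h
    · exact Or.inl ⟨h, hyseg, hy12.2⟩
    · exact Or.inr ⟨h, hyseg, hy12.1⟩
  -- Ex ≠ Ey
  have hExEy : Ex ≠ Ey := by
    intro hEq
    -- y lies on the segment of edge {u,v}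
    have hy_on : y ∈ segment ℝ (ψ u) (ψ v) := by
      have hu'm : u' ∈ Ex := by rw [hEq]; simp [hEy]
      have hv'm : v' ∈ Ex := by rw [hEq]; simp [hEy]
      simp only [hEx, Finset.mem_insert, Finset.mem_singleton] at hu'm hv'm
      rcases hu'm with rfl | rfl
      · rcases hv'm with rfl | rfl
        · exact absurd rfl huv'
        · exact hyseg
      · rcases hv'm with rfl | rfl
        · rw [segment_symm]; exact hyseg
        · exact absurd rfl huv'
    rcases hxside with h | h
    · exact not_same_edge ψ t₁ t₂ h_disj hcard₂ h_gp (h (Finset.mem_insert_self u {v})) hxy hxseg hy_on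
        hx12.2 hy12.2
    · exact not_same_edge ψ t₂ t₁ h_disj.symm hcard₁ h_gp' (h (Finset.mem_insert_self u {v})) hxy hxseg hy_on
        hx12.1 hy12.1
  -- counting
  set ES := Finset.powersetCard 2 t₁ ∪ Finset.powersetCard 2 t₂ with hES
  have hExES : Ex ∈ ES := by
    rcases hxside with h | h
    · exact Finset.mem_union_left _ (Finset.mem_powersetCard.mpr ⟨h, Finset.card_pair huv⟩)
    · exact Finset.mem_union_right _ (Finset.mem_powersetCard.mpr ⟨h, Finset.card_pair huv⟩)
  have hEyES : Ey ∈ ES := by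
    rcases hyside with h | h
    · exact Finset.mem_union_left _ (Finset.mem_powersetCard.mpr ⟨h, Finset.card_pair huv'⟩)
    · exact Finset.mem_union_right _ (Finset.mem_powersetCard.mpr ⟨h, Finset.card_pair huv'⟩)
  have hEScard : ES.card = 6 := by
    rw [hES, Finset.card_union_of_disjoint, Finset.card_powersetCard,
      Finset.card_powersetCard, hcard₁, hcard₂]
    · rfl
    · rw [Finset.disjoint_left]
      intro e' he₁ he₂
      rw [Finset.mem_powersetCard] at he₁ he₂
      have : e' ⊆ t₁ ∩ t₂ := Finset.subset_inter he₁.1 he₂.1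
      rw [Finset.disjoint_iff_inter_eq_empty.mp h_disj] at this
      have := Finset.card_le_card this
      rw [he₁.2] at this
      simp at this
  have hsubF : (ES.filter fun e => ∃ t ∈ triangles, e ⊆ t ∧ t ≠ t₁ ∧ t ≠ t₂ ∧ t ⊆ t₁ ∪ t₂)
      ⊆ ES \ {Ex, Ey} := by
    intro e' he'
    rw [Finset.mem_filter] at he'
    rw [Finset.mem_sdiff]
    refine ⟨he'.1, ?_⟩
    simp only [Finset.mem_insert, Finset.mem_singleton]
    rintro (rfl | rfl)
    · exact hbadx he'.2
    · exact hbady he'.2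
  calc (ES.filter fun e => ∃ t ∈ triangles, e ⊆ t ∧ t ≠ t₁ ∧ t ≠ t₂ ∧ t ⊆ t₁ ∪ t₂).card
      ≤ (ES \ {Ex, Ey}).card := Finset.card_le_card hsubF
    _ ≤ ES.card - ({Ex, Ey} : Finset (Finset V)).card := by
        rw [Finset.card_sdiff_of_subset (by intro e' he'; simp at he'; rcases he' with rfl | rfl <;> assumption)]
    _ ≤ 4 := by rw [hEScard, Finset.card_pair hExEy]
end
end
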